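/- arXiv:1011.0517 — 2 statements merged into one kernel-verified Lean document; each statement's English description precedes it below -/
import Mathlib

section
/- There exists a set of 8 points in the plane in general position that contains no 5-hole, no empty 6-pseudo-triangle, and no empty 7-pseudo-triangle. -/
open Set

noncomputable section

/-- Points of the plane. -/
abbrev Pt : Type := ℝ × ℝ

/-- Two-dimensional cross product. -/
def cross2 (u w : Pt) : ℝ := u.1 * w.2 - u.2 * w.1

/-- A set of points is in general position if no three of its points are collinear. -/
def GenPos (S : Set Pt) : Prop :=
  ∀ p ∈ S, ∀ q ∈ S, ∀ r ∈ S, p ≠ q → p ≠ r → q ≠ r →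
    ¬ Collinear ℝ ({p, q, r} : Set Pt)

/-- `v : ZMod n → Pt` lists the vertices (in cyclic order) of a simple polygon:
vertices are pairwise distinct, non-adjacent edges are disjoint, and adjacent
edges meet exactly in their common vertex. -/
structure IsSimplePolygon (n : ℕ) (v : ZMod n → Pt) : Prop where
  three_le : 3 ≤ n
  inj : Function.Injective v
  nonadj : ∀ i j : ZMod n, i ≠ j → i ≠ j + 1 → j ≠ i + 1 →
    segment ℝ (v i) (v (i + 1)) ∩ segment ℝ (v j) (v (j + 1)) = ∅
  adj : ∀ i : ZMod n,
    segment ℝ (v i) (v (i + 1)) ∩ segment ℝ (v (i + 1)) (v (i + 2)) = {v (i + 1)}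

/-- Twice the signed area of a polygon. -/
def signedArea (n : ℕ) (v : ZMod n → Pt) : ℝ :=
  if h : n = 0 then 0 else
    haveI : NeZero n := ⟨h⟩
    ∑ i : ZMod n, cross2 (v i) (v (i + 1))

/-- The turning cross product at vertex `i`. -/
def vtxCross (n : ℕ) (v : ZMod n → Pt) (i : ZMod n) : ℝ :=
  cross2 (v i - v (i - 1)) (v (i + 1) - v i)

/-- Vertex `i` of a simple polygon is convex (interior angle `< π`) iff the turn
at `i` has the same (strict) sign as the orientation of the polygon. -/
def IsConvexVtx (n : ℕ) (v : ZMod n → Pt) (i : ZMod n) : Prop :=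
  0 < vtxCross n v i * signedArea n v

/-- A pseudo-triangle: a simple polygon in which every vertex is strictly convex or
strictly reflex, with exactly three convex vertices. -/
def IsPseudoTriangle (n : ℕ) (v : ZMod n → Pt) : Prop :=
  IsSimplePolygon n v ∧ (∀ i : ZMod n, vtxCross n v i ≠ 0) ∧
    {i : ZMod n | IsConvexVtx n v i}.ncard = 3

/-- A standard pseudo-triangle: each of the three side chains has at least two
edges, i.e. no two convex vertices are cyclically adjacent. -/
def IsStandardPseudoTriangle (n : ℕ) (v : ZMod n → Pt) : Prop :=
  IsPseudoTriangle n v ∧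
    ∀ i : ZMod n, IsConvexVtx n v i → ¬ IsConvexVtx n v (i + 1)

/-- A mountain: a pseudo-triangle in which exactly one side chain consists of a
single edge (i.e. exactly one cyclically adjacent pair of convex vertices);
a 3-mountain is a triangle. -/
def IsMountain (n : ℕ) (v : ZMod n → Pt) : Prop :=
  IsPseudoTriangle n v ∧
    (n = 3 ∨ {i : ZMod n | IsConvexVtx n v i ∧ IsConvexVtx n v (i + 1)}.ncard = 1)

/-- The boundary of a polygon: the union of its edges. -/
def polyBoundary (n : ℕ) (v : ZMod n → Pt) : Set Pt :=
  ⋃ i : ZMod n, segment ℝ (v i) (v (i + 1))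

/-- The interior of a simple polygon: the union of the bounded connected
components of the complement of its boundary. -/
def polyInterior (n : ℕ) (v : ZMod n → Pt) : Set Pt :=
  {x : Pt | x ∉ polyBoundary n v ∧
    Bornology.IsBounded (connectedComponentIn (polyBoundary n v)ᶜ x)}

/-- A polygon is empty in `S` if its interior contains no point of `S`. -/
def EmptyIn (n : ℕ) (v : ZMod n → Pt) (S : Set Pt) : Prop :=
  polyInterior n v ∩ S = ∅

/-- `S` contains an empty `ℓ`-pseudo-triangle. -/
def HasEmptyPseudoTriangle (ℓ : ℕ) (S : Set Pt) : Prop :=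
  ∃ v : ZMod ℓ → Pt, Set.range v ⊆ S ∧ IsPseudoTriangle ℓ v ∧ EmptyIn ℓ v S

/-- A set of points is in convex position if each of them is a vertex of their
convex hull. -/
def ConvexPos (H : Set Pt) : Prop := ∀ p ∈ H, p ∉ convexHull ℝ (H \ {p})

/-- `H` is a `k`-hole in `S`: `k` points of `S` in convex position whose convex
hull contains no other point of `S` in its interior. -/
def IsHole (k : ℕ) (S H : Set Pt) : Prop :=
  H ⊆ S ∧ H.ncard = k ∧ ConvexPos H ∧
    ∀ p ∈ S, p ∈ interior (convexHull ℝ H) → p ∈ H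

/-- `S` contains a `k`-hole. -/
def HasHole (k : ℕ) (S : Set Pt) : Prop := ∃ H : Set Pt, IsHole k S H

/-- The points of `S` that are vertices of the convex hull of `S`. -/
def hullVertices (S : Set Pt) : Set Pt := {p ∈ S | p ∉ convexHull ℝ (S \ {p})}

/-- The points of `S` lying in the interior of the convex hull of `S`. -/
def interiorPts (S : Set Pt) : Set Pt := {p ∈ S | p ∈ interior (convexHull ℝ S)}

/-- `S` is `λ`-convex: every triangle with vertices in `S` contains at most `λ`
points of `S` in its interior. -/
def LambdaConvex (lam : ℕ) (S : Set Pt) : Prop :=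
  ∀ p ∈ S, ∀ q ∈ S, ∀ r ∈ S,
    (S ∩ interior (convexHull ℝ ({p, q, r} : Set Pt))).ncard ≤ lam


namespace S10

lemma not_collinear_of_cross2 {p q r : Pt} (h : cross2 (q - p) (r - p) ≠ 0) :
    ¬ Collinear ℝ ({p, q, r} : Set Pt) := by
  intro hc
  rw [collinear_iff_of_mem (show p ∈ ({p,q,r} : Set Pt) by simp)] at hc
  obtain ⟨v, hv⟩ := hc
  obtain ⟨tq, hq⟩ := hv q (by simp)
  obtain ⟨tr, hr⟩ := hv r (by simp)
  apply h
  have hq' : q - p = tq • v := by rw [hq]; abel_nf; simp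
  have hr' : r - p = tr • v := by rw [hr]; abel_nf; simp
  rw [hq', hr']
  simp only [cross2, Prod.smul_fst, Prod.smul_snd, smul_eq_mul]
  ring

lemma combo_aux {a b c q : Pt} {o1 o2 o3 : ℝ} (h1 : 0 < o1) (h2 : 0 < o2) (h3 : 0 < o3)
    (key : (o1 + o2 + o3) • q = o2 • a + (o3 • b + o1 • c)) :
    q ∈ convexHull ℝ ({a, b, c} : Set Pt) := by
  have hσ : (0:ℝ) < o1 + o2 + o3 := by positivity
  have h31 : (0:ℝ) < o3 + o1 := by positivity
  have hy : (o3/(o3+o1)) • b + (o1/(o3+o1)) • c ∈ convexHull ℝ ({a,b,c} : Set Pt) := by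
    apply segment_subset_convexHull (show b ∈ ({a,b,c} : Set Pt) by simp)
      (show c ∈ ({a,b,c} : Set Pt) by simp)
    exact ⟨o3/(o3+o1), o1/(o3+o1), by positivity, by positivity, by field_simp, rfl⟩
  have hq : q ∈ segment ℝ a ((o3/(o3+o1)) • b + (o1/(o3+o1)) • c) := by
    refine ⟨o2/(o1+o2+o3), (o3+o1)/(o1+o2+o3), by positivity, by positivity, by field_simp; ring, ?_⟩
    have : q = (o1+o2+o3)⁻¹ • ((o1+o2+o3) • q) := by
      rw [smul_smul, inv_mul_cancel₀ (ne_of_gt hσ), one_smul]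
    rw [this, key]
    match_scalars <;> field_simp <;> ring
  exact (convex_convexHull ℝ _).segment_subset (subset_convexHull ℝ _ (by simp)) hy hq


lemma triangle_key {a b c q : Pt} :
    (cross2 (b - a) (q - a) + cross2 (c - b) (q - b) + cross2 (a - c) (q - c)) • q
      = cross2 (c - b) (q - b) • a + (cross2 (a - c) (q - c) • b + cross2 (b - a) (q - a) • c) := by
  apply Prod.ext <;>
  · simp only [cross2, Prod.fst_sub, Prod.snd_sub, Prod.smul_fst, Prod.smul_snd,
      Prod.fst_add, Prod.snd_add, smul_eq_mul]
    ring

lemma mem_convexHull_triangle {a b c q : Pt}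
    (h1 : 0 < cross2 (b - a) (q - a)) (h2 : 0 < cross2 (c - b) (q - b))
    (h3 : 0 < cross2 (a - c) (q - c)) :
    q ∈ convexHull ℝ ({a, b, c} : Set Pt) :=
  combo_aux h1 h2 h3 triangle_key

lemma mem_interior_triangle {a b c q : Pt}
    (h1 : 0 < cross2 (b - a) (q - a)) (h2 : 0 < cross2 (c - b) (q - b))
    (h3 : 0 < cross2 (a - c) (q - c)) :
    q ∈ interior (convexHull ℝ ({a, b, c} : Set Pt)) := by
  have hopen : IsOpen {x : Pt | 0 < cross2 (b - a) (x - a) ∧ 0 < cross2 (c - b) (x - b)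
      ∧ 0 < cross2 (a - c) (x - c)} := by
    have hc : ∀ u w : Pt, Continuous fun x : Pt => cross2 (u - w) (x - w) := by
      intro u w
      simp only [cross2, Prod.fst_sub, Prod.snd_sub]
      fun_prop
    exact (isOpen_lt continuous_const (hc b a)).inter
      ((isOpen_lt continuous_const (hc c b)).inter (isOpen_lt continuous_const (hc a c)))
  refine interior_maximal ?_ hopen ⟨h1, h2, h3⟩
  intro x hx
  exact mem_convexHull_triangle hx.1 hx.2.1 hx.2.2

lemma cross_aux {a b c d : Pt} {o1 o2 p1 p2 : ℝ}
    (h1 : o1 * o2 < 0) (h2 : p1 * p2 < 0)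
    (hpq : p1 - p2 = -(o1 - o2))
    (key : (o1 - o2) • (a - c) = p1 • (b - a) + o1 • (d - c)) :
    (segment ℝ a b ∩ segment ℝ c d).Nonempty := by
  have hD1 : 0 < o1 * (o1 - o2) := by rcases mul_neg_iff.mp h1 with ⟨h,h'⟩|⟨h,h'⟩ <;> nlinarith
  have hD2 : 0 < (-o2) * (o1 - o2) := by rcases mul_neg_iff.mp h1 with ⟨h,h'⟩|⟨h,h'⟩ <;> nlinarith
  have hE1 : 0 < p1 * (p1 - p2) := by rcases mul_neg_iff.mp h2 with ⟨h,h'⟩|⟨h,h'⟩ <;> nlinarith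
  have hE2 : 0 < (-p2) * (p1 - p2) := by rcases mul_neg_iff.mp h2 with ⟨h,h'⟩|⟨h,h'⟩ <;> nlinarith
  have hDne : o1 - o2 ≠ 0 := by intro h; rw [h] at hD1; simp at hD1
  have hEne : p1 - p2 ≠ 0 := by intro h; rw [h] at hE1; simp at hE1
  have hs0 : 0 < p1 / (p1 - p2) := div_pos_iff.mpr (by
    rcases mul_pos_iff.mp hE1 with ⟨h,h'⟩|⟨h,h'⟩; exacts [Or.inl ⟨h,h'⟩, Or.inr ⟨h,h'⟩])
  have hs1 : p1 / (p1 - p2) < 1 := by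
    rw [div_lt_one_iff]
    rcases mul_pos_iff.mp hE2 with ⟨h,h'⟩|⟨h,h'⟩
    · exact Or.inl ⟨h', by linarith⟩
    · exact Or.inr (Or.inr ⟨h', by linarith⟩)
  have ht0 : 0 < o1 / (o1 - o2) := div_pos_iff.mpr (by
    rcases mul_pos_iff.mp hD1 with ⟨h,h'⟩|⟨h,h'⟩; exacts [Or.inl ⟨h,h'⟩, Or.inr ⟨h,h'⟩])
  have ht1 : o1 / (o1 - o2) < 1 := by
    rw [div_lt_one_iff]
    rcases mul_pos_iff.mp hD2 with ⟨h,h'⟩|⟨h,h'⟩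
    · exact Or.inl ⟨h', by linarith⟩
    · exact Or.inr (Or.inr ⟨h', by linarith⟩)
  refine ⟨a + (p1 / (p1 - p2)) • (b - a), ?_, ?_⟩
  · rw [segment_eq_image']
    exact ⟨p1 / (p1 - p2), ⟨le_of_lt hs0, le_of_lt hs1⟩, rfl⟩
  · rw [segment_eq_image']
    refine ⟨o1 / (o1 - o2), ⟨le_of_lt ht0, le_of_lt ht1⟩, ?_⟩
    have key1 := congrArg Prod.fst key
    have key2 := congrArg Prod.snd key
    simp only [Prod.smul_fst, Prod.smul_snd, Prod.fst_sub, Prod.snd_sub, Prod.fst_add,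
      Prod.snd_add, smul_eq_mul] at key1 key2
    have hpq' : p1 - p2 = -(o1 - o2) := hpq
    apply Prod.ext <;>
      simp only [Prod.smul_fst, Prod.smul_snd, Prod.fst_sub, Prod.snd_sub, Prod.fst_add,
        Prod.snd_add, smul_eq_mul]
    · rw [hpq', div_neg]
      field_simp
      linear_combination -key1
    · rw [hpq', div_neg]
      field_simp
      linear_combination -key2

lemma segments_cross {a b c d : Pt}
    (h1 : cross2 (b - a) (c - a) * cross2 (b - a) (d - a) < 0)
    (h2 : cross2 (d - c) (a - c) * cross2 (d - c) (b - c) < 0) :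
    (segment ℝ a b ∩ segment ℝ c d).Nonempty := by
  apply cross_aux h1 h2
  · simp only [cross2, Prod.fst_sub, Prod.snd_sub]; ring
  · apply Prod.ext <;>
    · simp only [cross2, Prod.fst_sub, Prod.snd_sub, Prod.smul_fst, Prod.smul_snd,
        Prod.fst_add, Prod.snd_add, smul_eq_mul]
      ring


lemma rot_simple {n : ℕ} {v : ZMod n → Pt} (h : IsSimplePolygon n v) (t : ZMod n) :
    IsSimplePolygon n (fun i => v (i + t)) where
  three_le := h.three_le
  inj := h.inj.comp (fun a b hab => by simpa using hab)
  nonadj := by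
    intro i j h1 h2 h3
    have e1 : ∀ k : ZMod n, k + 1 + t = k + t + 1 := fun k => by ring
    show segment ℝ (v (i+t)) (v (i+1+t)) ∩ segment ℝ (v (j+t)) (v (j+1+t)) = ∅
    rw [e1 i, e1 j]
    apply h.nonadj (i + t) (j + t)
    · simpa using h1
    · intro hc; apply h2; have : i + t = j + 1 + t := by rw [hc]; ring
      simpa using this
    · intro hc; apply h3; have : j + t = i + 1 + t := by rw [hc]; ring
      simpa using this
  adj := by
    intro i
    have e1 : ∀ k : ZMod n, k + 1 + t = k + t + 1 := fun k => by ring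
    have e2 : i + 2 + t = i + t + 2 := by ring
    show segment ℝ (v (i+t)) (v (i+1+t)) ∩ segment ℝ (v (i+1+t)) (v (i+2+t)) = {v (i+1+t)}
    rw [e1 i, e2]
    exact h.adj (i + t)

lemma rot_area {n : ℕ} [NeZero n] (v : ZMod n → Pt) (t : ZMod n) :
    signedArea n (fun i => v (i + t)) = signedArea n v := by
  rw [signedArea, signedArea, dif_neg (NeZero.ne n), dif_neg (NeZero.ne n)]
  apply Fintype.sum_equiv (Equiv.addRight t)
  intro i
  simp only [Equiv.coe_addRight]
  congr 2
  ring

lemma rot_vtx {n : ℕ} (v : ZMod n → Pt) (t : ZMod n) (i : ZMod n) :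
    vtxCross n (fun i => v (i + t)) i = vtxCross n v (i + t) := by
  rw [vtxCross, vtxCross]
  congr 3 <;> ring_nf

lemma rot_convex {n : ℕ} [NeZero n] (v : ZMod n → Pt) (t : ZMod n) (i : ZMod n) :
    IsConvexVtx n (fun i => v (i + t)) i ↔ IsConvexVtx n v (i + t) := by
  rw [IsConvexVtx, IsConvexVtx, rot_vtx, rot_area]

lemma rot_count {n : ℕ} [NeZero n] (v : ZMod n → Pt) (t : ZMod n) :
    {i : ZMod n | IsConvexVtx n (fun i => v (i + t)) i}.ncard
      = {i : ZMod n | IsConvexVtx n v i}.ncard := by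
  have : {i : ZMod n | IsConvexVtx n (fun i => v (i + t)) i}
      = (Equiv.addRight t) ⁻¹' {i : ZMod n | IsConvexVtx n v i} := by
    ext i; simp [rot_convex]
  rw [this, ← Equiv.image_symm_eq_preimage]
  exact Set.ncard_image_of_injective _ (Equiv.injective _)

lemma cross2_neg_neg (a b : Pt) : cross2 (-a) (-b) = cross2 a b := by
  simp [cross2]

lemma cross2_swap (a b : Pt) : cross2 a b = -cross2 b a := by
  simp [cross2]; ring

lemma refl_simple {n : ℕ} {v : ZMod n → Pt} (h : IsSimplePolygon n v) :
    IsSimplePolygon n (fun i => v (-i)) where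
  three_le := h.three_le
  inj := h.inj.comp (fun a b hab => by simpa using neg_injective hab)
  nonadj := by
    intro i j h1 h2 h3
    show segment ℝ (v (-i)) (v (-(i+1))) ∩ segment ℝ (v (-j)) (v (-(j+1))) = ∅
    have key := h.nonadj (-i-1) (-j-1)
      (fun hc => h1 (by linear_combination -hc))
      (fun hc => h3 (by linear_combination hc))
      (fun hc => h2 (by linear_combination hc))
    rw [show (-i-1+1 : ZMod n) = -i by ring, show (-j-1+1 : ZMod n) = -j by ring] at key
    rw [show (-(i+1) : ZMod n) = -i-1 by ring, show (-(j+1) : ZMod n) = -j-1 by ring,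
      segment_symm, segment_symm ℝ (v (-j))]
    exact key
  adj := by
    intro i
    show segment ℝ (v (-i)) (v (-(i+1))) ∩ segment ℝ (v (-(i+1))) (v (-(i+2))) = {v (-(i+1))}
    have key := h.adj (-i-2)
    rw [show (-i-2+1 : ZMod n) = -(i+1) by ring, show (-i-2+2 : ZMod n) = -i by ring] at key
    rw [show (-(i+2) : ZMod n) = -i-2 by ring, Set.inter_comm,
      segment_symm ℝ (v (-(i+1))) (v (-i-2)), segment_symm ℝ (v (-i)) (v (-(i+1)))]
    exact key

lemma refl_area {n : ℕ} [NeZero n] (v : ZMod n → Pt) :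
    signedArea n (fun i => v (-i)) = - signedArea n v := by
  rw [signedArea, signedArea, dif_neg (NeZero.ne n), dif_neg (NeZero.ne n)]
  rw [← Finset.sum_neg_distrib]
  apply Fintype.sum_equiv ((Equiv.neg (ZMod n)).trans (Equiv.subRight 1))
  intro i
  simp only [Equiv.trans_apply, Equiv.neg_apply, Equiv.subRight_apply]
  rw [show (-i-1+1 : ZMod n) = -i by ring, show (-(i+1) : ZMod n) = -i-1 by ring, cross2_swap]

lemma refl_vtx {n : ℕ} (v : ZMod n → Pt) (i : ZMod n) :
    vtxCross n (fun i => v (-i)) i = - vtxCross n v (-i) := by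
  rw [vtxCross, vtxCross]
  show cross2 (v (-i) - v (-(i-1))) (v (-(i+1)) - v (-i)) = _
  have e1 : -(i-1) = -i+1 := by ring
  have e2 : -(i+1) = -i-1 := by ring
  rw [e1, e2]
  rw [show v (-i) - v (-i+1) = -(v (-i+1) - v (-i)) by abel,
      show v (-i-1) - v (-i) = -(v (-i) - v (-i-1)) by abel, cross2_neg_neg, cross2_swap]

lemma refl_convex {n : ℕ} [NeZero n] (v : ZMod n → Pt) (i : ZMod n) :
    IsConvexVtx n (fun i => v (-i)) i ↔ IsConvexVtx n v (-i) := by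
  rw [IsConvexVtx, IsConvexVtx, refl_vtx, refl_area]
  constructor <;> intro h <;> nlinarith

lemma refl_count {n : ℕ} [NeZero n] (v : ZMod n → Pt) :
    {i : ZMod n | IsConvexVtx n (fun i => v (-i)) i}.ncard
      = {i : ZMod n | IsConvexVtx n v i}.ncard := by
  have : {i : ZMod n | IsConvexVtx n (fun i => v (-i)) i}
      = (Equiv.neg (ZMod n)) ⁻¹' {i : ZMod n | IsConvexVtx n v i} := by
    ext i; simp [refl_convex, Equiv.neg_apply]
  rw [this, ← Equiv.image_symm_eq_preimage]
  exact Set.ncard_image_of_injective _ (Equiv.injective _)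


def ipts : Fin 8 → ℤ × ℤ := ![(6,8),(7,2),(9,1),(12,7),(3,3),(1,10),(2,3),(3,9)]

def icross (u w : ℤ × ℤ) : ℤ := u.1 * w.2 - u.2 * w.1

def rpt (p : ℤ × ℤ) : Pt := ((p.1 : ℝ), (p.2 : ℝ))

def pts (i : Fin 8) : Pt := rpt (ipts i)

lemma rpt_inj : Function.Injective rpt := by
  intro u v h
  have h1 := congrArg Prod.fst h
  have h2 := congrArg Prod.snd h
  simp only [rpt] at h1 h2
  exact Prod.ext (by exact_mod_cast h1) (by exact_mod_cast h2)

lemma pts_inj : Function.Injective pts := by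
  intro i j h
  have h2 : ipts i = ipts j := rpt_inj h
  clear h
  revert i j
  decide

lemma cross2_pts (a b c d : Fin 8) :
    cross2 (pts a - pts b) (pts c - pts d)
      = ((icross (ipts a - ipts b) (ipts c - ipts d) : ℤ) : ℝ) := by
  simp only [cross2, icross, pts, rpt, Prod.fst_sub, Prod.snd_sub]
  push_cast
  ring

lemma cross2_pts' (a b : Fin 8) :
    cross2 (pts a) (pts b) = ((icross (ipts a) (ipts b) : ℤ) : ℝ) := by
  simp only [cross2, icross, pts, rpt]
  push_cast
  ring

def V (p q r : Fin 8) : ℤ := icross (ipts q - ipts p) (ipts r - ipts q)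

def XT (a b c d : Fin 8) : Prop :=
  icross (ipts b - ipts a) (ipts c - ipts a) * icross (ipts b - ipts a) (ipts d - ipts a) < 0 ∧
  icross (ipts d - ipts c) (ipts a - ipts c) * icross (ipts d - ipts c) (ipts b - ipts c) < 0

instance (a b c d : Fin 8) : Decidable (XT a b c d) := by unfold XT; infer_instance

def inT (q a b c : Fin 8) : Prop :=
  0 < icross (ipts b - ipts a) (ipts q - ipts a) ∧
  0 < icross (ipts c - ipts b) (ipts q - ipts b) ∧
  0 < icross (ipts a - ipts c) (ipts q - ipts c)

instance (q a b c : Fin 8) : Decidable (inT q a b c) := by unfold inT; infer_instance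

def A6 (a0 : Fin 8) (a1 : Fin 8) (a2 : Fin 8) (a3 : Fin 8) (a4 : Fin 8) (a5 : Fin 8) : ℤ := icross (ipts a0) (ipts a1) + icross (ipts a1) (ipts a2) + icross (ipts a2) (ipts a3) + icross (ipts a3) (ipts a4) + icross (ipts a4) (ipts a5) + icross (ipts a5) (ipts a0)

def CP6 (a0 : Fin 8) (a1 : Fin 8) (a2 : Fin 8) (a3 : Fin 8) (a4 : Fin 8) (a5 : Fin 8) : ℕ := (if 0 < V a5 a0 a1 then 1 else 0) + (if 0 < V a0 a1 a2 then 1 else 0) + (if 0 < V a1 a2 a3 then 1 else 0) + (if 0 < V a2 a3 a4 then 1 else 0) + (if 0 < V a3 a4 a5 then 1 else 0) + (if 0 < V a4 a5 a0 then 1 else 0)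

def CN6 (a0 : Fin 8) (a1 : Fin 8) (a2 : Fin 8) (a3 : Fin 8) (a4 : Fin 8) (a5 : Fin 8) : ℕ := (if V a5 a0 a1 < 0 then 1 else 0) + (if V a0 a1 a2 < 0 then 1 else 0) + (if V a1 a2 a3 < 0 then 1 else 0) + (if V a2 a3 a4 < 0 then 1 else 0) + (if V a3 a4 a5 < 0 then 1 else 0) + (if V a4 a5 a0 < 0 then 1 else 0)

def D6 (a0 : Fin 8) (a1 : Fin 8) (a2 : Fin 8) (a3 : Fin 8) (a4 : Fin 8) (a5 : Fin 8) : Prop := XT a0 a1 a2 a3 ∨ XT a0 a1 a3 a4 ∨ XT a0 a1 a4 a5 ∨ XT a1 a2 a3 a4 ∨ XT a1 a2 a4 a5 ∨ XT a1 a2 a5 a0 ∨ XT a2 a3 a4 a5 ∨ XT a2 a3 a5 a0 ∨ XT a3 a4 a5 a0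

instance (a0 : Fin 8) (a1 : Fin 8) (a2 : Fin 8) (a3 : Fin 8) (a4 : Fin 8) (a5 : Fin 8) : Decidable (D6 a0 a1 a2 a3 a4 a5) := by unfold D6; infer_instance

def B6 (a0 : Fin 8) (a1 : Fin 8) (a2 : Fin 8) (a3 : Fin 8) (a4 : Fin 8) (a5 : Fin 8) : Prop :=
  (0 < A6 a0 a1 a2 a3 a4 a5 → (CP6 a0 a1 a2 a3 a4 a5 ≠ 3 ∨ D6 a0 a1 a2 a3 a4 a5)) ∧
  (A6 a0 a1 a2 a3 a4 a5 < 0 → (CN6 a0 a1 a2 a3 a4 a5 ≠ 3 ∨ D6 a0 a1 a2 a3 a4 a5))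

instance (a0 : Fin 8) (a1 : Fin 8) (a2 : Fin 8) (a3 : Fin 8) (a4 : Fin 8) (a5 : Fin 8) : Decidable (B6 a0 a1 a2 a3 a4 a5) := by unfold B6; infer_instance

lemma zsum6 {M : Type*} [AddCommMonoid M] (f : ZMod 6 → M) :
    ∑ i : ZMod 6, f i = f 0 + f 1 + f 2 + f 3 + f 4 + f 5 := by
  rw [show (Finset.univ : Finset (ZMod 6)) = {0,1,2,3,4,5} from by decide]
  rw [Finset.sum_insert (by decide)]
  rw [Finset.sum_insert (by decide)]
  rw [Finset.sum_insert (by decide)]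
  rw [Finset.sum_insert (by decide)]
  rw [Finset.sum_insert (by decide)]
  rw [Finset.sum_singleton]
  abel

set_option maxRecDepth 1000000 in
set_option synthInstance.maxSize 4000 in
set_option synthInstance.maxHeartbeats 2000000 in
theorem chk6 : ∀ a0 a1 : Fin 8, a0 < a1 →
    ∀ a2, a0 < a2 → a2 ≠ a1 →
    ∀ a3, a0 < a3 → a3 ≠ a1 → a3 ≠ a2 →
    ∀ a4, a0 < a4 → a4 ≠ a1 → a4 ≠ a2 → a4 ≠ a3 →
    ∀ a5, a0 < a5 → a1 < a5 → a5 ≠ a1 → a5 ≠ a2 → a5 ≠ a3 → a5 ≠ a4 →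
    B6 a0 a1 a2 a3 a4 a5 := by decide +kernel

lemma bridge6 (v : ZMod 6 → Pt) (w : ZMod 6 → Fin 8) (hw : ∀ i, v i = pts (w i))
    (hsp : IsSimplePolygon 6 v)
    (hcount : {i : ZMod 6 | IsConvexVtx 6 v i}.ncard = 3)
    (hB : B6 (w 0) (w 1) (w 2) (w 3) (w 4) (w 5)) : False := by
  have hA : signedArea 6 v = ((A6 (w 0) (w 1) (w 2) (w 3) (w 4) (w 5) : ℤ) : ℝ) := by
    rw [signedArea, dif_neg (by norm_num)]
    rw [zsum6]
    simp only [show ((0 : ZMod 6) + 1) = 1 from by decide,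
      show ((0 : ZMod 6) - 1) = 5 from by decide,
      show ((1 : ZMod 6) + 1) = 2 from by decide,
      show ((1 : ZMod 6) - 1) = 0 from by decide,
      show ((2 : ZMod 6) + 1) = 3 from by decide,
      show ((2 : ZMod 6) - 1) = 1 from by decide,
      show ((3 : ZMod 6) + 1) = 4 from by decide,
      show ((3 : ZMod 6) - 1) = 2 from by decide,
      show ((4 : ZMod 6) + 1) = 5 from by decide,
      show ((4 : ZMod 6) - 1) = 3 from by decide,
      show ((5 : ZMod 6) + 1) = 0 from by decide,
      show ((5 : ZMod 6) - 1) = 4 from by decide]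
    simp only [hw, cross2_pts']
    rw [A6]
    push_cast
    ring
  have hV : ∀ i : ZMod 6, vtxCross 6 v i = ((V (w (i-1)) (w i) (w (i+1)) : ℤ) : ℝ) := by
    intro i
    rw [vtxCross, hw i, hw (i-1), hw (i+1), cross2_pts]
    rfl
  have hD : D6 (w 0) (w 1) (w 2) (w 3) (w 4) (w 5) → False := by
    intro hd
    rcases hd with hx|hx|hx|hx|hx|hx|hx|hx|hx
    · have hna := hsp.nonadj 0 2 (by decide) (by decide) (by decide)
      rw [show ((0 : ZMod 6) + 1) = 1 from by decide,
        show ((2 : ZMod 6) + 1) = 3 from by decide] at hna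
      obtain ⟨hx1, hx2⟩ := hx
      apply Set.not_nonempty_empty
      rw [← hna]
      apply segments_cross
      · rw [hw 0, hw 1, hw 2, hw 3, cross2_pts, cross2_pts, ← Int.cast_mul]
        exact_mod_cast hx1
      · rw [hw 0, hw 1, hw 2, hw 3, cross2_pts, cross2_pts, ← Int.cast_mul]
        exact_mod_cast hx2
    · have hna := hsp.nonadj 0 3 (by decide) (by decide) (by decide)
      rw [show ((0 : ZMod 6) + 1) = 1 from by decide,
        show ((3 : ZMod 6) + 1) = 4 from by decide] at hna
      obtain ⟨hx1, hx2⟩ := hx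
      apply Set.not_nonempty_empty
      rw [← hna]
      apply segments_cross
      · rw [hw 0, hw 1, hw 3, hw 4, cross2_pts, cross2_pts, ← Int.cast_mul]
        exact_mod_cast hx1
      · rw [hw 0, hw 1, hw 3, hw 4, cross2_pts, cross2_pts, ← Int.cast_mul]
        exact_mod_cast hx2
    · have hna := hsp.nonadj 0 4 (by decide) (by decide) (by decide)
      rw [show ((0 : ZMod 6) + 1) = 1 from by decide,
        show ((4 : ZMod 6) + 1) = 5 from by decide] at hna
      obtain ⟨hx1, hx2⟩ := hx
      apply Set.not_nonempty_empty
      rw [← hna]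
      apply segments_cross
      · rw [hw 0, hw 1, hw 4, hw 5, cross2_pts, cross2_pts, ← Int.cast_mul]
        exact_mod_cast hx1
      · rw [hw 0, hw 1, hw 4, hw 5, cross2_pts, cross2_pts, ← Int.cast_mul]
        exact_mod_cast hx2
    · have hna := hsp.nonadj 1 3 (by decide) (by decide) (by decide)
      rw [show ((1 : ZMod 6) + 1) = 2 from by decide,
        show ((3 : ZMod 6) + 1) = 4 from by decide] at hna
      obtain ⟨hx1, hx2⟩ := hx
      apply Set.not_nonempty_empty
      rw [← hna]
      apply segments_cross
      · rw [hw 1, hw 2, hw 3, hw 4, cross2_pts, cross2_pts, ← Int.cast_mul]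
        exact_mod_cast hx1
      · rw [hw 1, hw 2, hw 3, hw 4, cross2_pts, cross2_pts, ← Int.cast_mul]
        exact_mod_cast hx2
    · have hna := hsp.nonadj 1 4 (by decide) (by decide) (by decide)
      rw [show ((1 : ZMod 6) + 1) = 2 from by decide,
        show ((4 : ZMod 6) + 1) = 5 from by decide] at hna
      obtain ⟨hx1, hx2⟩ := hx
      apply Set.not_nonempty_empty
      rw [← hna]
      apply segments_cross
      · rw [hw 1, hw 2, hw 4, hw 5, cross2_pts, cross2_pts, ← Int.cast_mul]
        exact_mod_cast hx1
      · rw [hw 1, hw 2, hw 4, hw 5, cross2_pts, cross2_pts, ← Int.cast_mul]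
        exact_mod_cast hx2
    · have hna := hsp.nonadj 1 5 (by decide) (by decide) (by decide)
      rw [show ((1 : ZMod 6) + 1) = 2 from by decide,
        show ((5 : ZMod 6) + 1) = 0 from by decide] at hna
      obtain ⟨hx1, hx2⟩ := hx
      apply Set.not_nonempty_empty
      rw [← hna]
      apply segments_cross
      · rw [hw 1, hw 2, hw 5, hw 0, cross2_pts, cross2_pts, ← Int.cast_mul]
        exact_mod_cast hx1
      · rw [hw 1, hw 2, hw 5, hw 0, cross2_pts, cross2_pts, ← Int.cast_mul]
        exact_mod_cast hx2
    · have hna := hsp.nonadj 2 4 (by decide) (by decide) (by decide)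
      rw [show ((2 : ZMod 6) + 1) = 3 from by decide,
        show ((4 : ZMod 6) + 1) = 5 from by decide] at hna
      obtain ⟨hx1, hx2⟩ := hx
      apply Set.not_nonempty_empty
      rw [← hna]
      apply segments_cross
      · rw [hw 2, hw 3, hw 4, hw 5, cross2_pts, cross2_pts, ← Int.cast_mul]
        exact_mod_cast hx1
      · rw [hw 2, hw 3, hw 4, hw 5, cross2_pts, cross2_pts, ← Int.cast_mul]
        exact_mod_cast hx2
    · have hna := hsp.nonadj 2 5 (by decide) (by decide) (by decide)
      rw [show ((2 : ZMod 6) + 1) = 3 from by decide,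
        show ((5 : ZMod 6) + 1) = 0 from by decide] at hna
      obtain ⟨hx1, hx2⟩ := hx
      apply Set.not_nonempty_empty
      rw [← hna]
      apply segments_cross
      · rw [hw 2, hw 3, hw 5, hw 0, cross2_pts, cross2_pts, ← Int.cast_mul]
        exact_mod_cast hx1
      · rw [hw 2, hw 3, hw 5, hw 0, cross2_pts, cross2_pts, ← Int.cast_mul]
        exact_mod_cast hx2
    · have hna := hsp.nonadj 3 5 (by decide) (by decide) (by decide)
      rw [show ((3 : ZMod 6) + 1) = 4 from by decide,
        show ((5 : ZMod 6) + 1) = 0 from by decide] at hna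
      obtain ⟨hx1, hx2⟩ := hx
      apply Set.not_nonempty_empty
      rw [← hna]
      apply segments_cross
      · rw [hw 3, hw 4, hw 5, hw 0, cross2_pts, cross2_pts, ← Int.cast_mul]
        exact_mod_cast hx1
      · rw [hw 3, hw 4, hw 5, hw 0, cross2_pts, cross2_pts, ← Int.cast_mul]
        exact_mod_cast hx2
  rcases lt_trichotomy (A6 (w 0) (w 1) (w 2) (w 3) (w 4) (w 5)) 0 with hAs | hAs | hAs
  · rcases hB.2 hAs with hcnt | hd
    · apply hcnt
      have hset : {i : ZMod 6 | IsConvexVtx 6 v i}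
          = ↑(Finset.univ.filter (fun i : ZMod 6 => V (w (i-1)) (w i) (w (i+1)) < 0)) := by
        ext i
        simp only [Set.mem_setOf_eq, Finset.coe_filter, Finset.mem_univ, true_and]
        rw [IsConvexVtx, hV i, hA, ← Int.cast_mul]
        rw [show (0 : ℝ) = ((0 : ℤ) : ℝ) from by norm_cast, Int.cast_lt]
        constructor <;> intro h <;> nlinarith
      rw [hset, Set.ncard_coe_finset, Finset.card_filter, zsum6] at hcount
      simp only [show ((0 : ZMod 6) + 1) = 1 from by decide,
      show ((0 : ZMod 6) - 1) = 5 from by decide,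
      show ((1 : ZMod 6) + 1) = 2 from by decide,
      show ((1 : ZMod 6) - 1) = 0 from by decide,
      show ((2 : ZMod 6) + 1) = 3 from by decide,
      show ((2 : ZMod 6) - 1) = 1 from by decide,
      show ((3 : ZMod 6) + 1) = 4 from by decide,
      show ((3 : ZMod 6) - 1) = 2 from by decide,
      show ((4 : ZMod 6) + 1) = 5 from by decide,
      show ((4 : ZMod 6) - 1) = 3 from by decide,
      show ((5 : ZMod 6) + 1) = 0 from by decide,
      show ((5 : ZMod 6) - 1) = 4 from by decide] at hcount
      rw [CN6]
      exact hcount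
    · exact hD hd
  · exfalso
    have hset : {i : ZMod 6 | IsConvexVtx 6 v i} = ∅ := by
      ext i
      simp only [Set.mem_setOf_eq, Set.mem_empty_iff_false, iff_false]
      rw [IsConvexVtx, hV i, hA, ← Int.cast_mul]
      rw [show (0 : ℝ) = ((0 : ℤ) : ℝ) from by norm_cast, Int.cast_lt, hAs, mul_zero]
      exact lt_irrefl 0
    rw [hset] at hcount
    simp at hcount
  · rcases hB.1 hAs with hcnt | hd
    · apply hcnt
      have hset : {i : ZMod 6 | IsConvexVtx 6 v i}
          = ↑(Finset.univ.filter (fun i : ZMod 6 => 0 < V (w (i-1)) (w i) (w (i+1)))) := by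
        ext i
        simp only [Set.mem_setOf_eq, Finset.coe_filter, Finset.mem_univ, true_and]
        rw [IsConvexVtx, hV i, hA, ← Int.cast_mul]
        rw [show (0 : ℝ) = ((0 : ℤ) : ℝ) from by norm_cast, Int.cast_lt]
        constructor <;> intro h <;> nlinarith
      rw [hset, Set.ncard_coe_finset, Finset.card_filter, zsum6] at hcount
      simp only [show ((0 : ZMod 6) + 1) = 1 from by decide,
      show ((0 : ZMod 6) - 1) = 5 from by decide,
      show ((1 : ZMod 6) + 1) = 2 from by decide,
      show ((1 : ZMod 6) - 1) = 0 from by decide,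
      show ((2 : ZMod 6) + 1) = 3 from by decide,
      show ((2 : ZMod 6) - 1) = 1 from by decide,
      show ((3 : ZMod 6) + 1) = 4 from by decide,
      show ((3 : ZMod 6) - 1) = 2 from by decide,
      show ((4 : ZMod 6) + 1) = 5 from by decide,
      show ((4 : ZMod 6) - 1) = 3 from by decide,
      show ((5 : ZMod 6) + 1) = 0 from by decide,
      show ((5 : ZMod 6) - 1) = 4 from by decide] at hcount
      rw [CP6]
      exact hcount
    · exact hD hd

lemma noPT6core (v : ZMod 6 → Pt) (hsub : Set.range v ⊆ Set.range pts)
    (hsp : IsSimplePolygon 6 v)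
    (hcount : {i : ZMod 6 | IsConvexVtx 6 v i}.ncard = 3) : False := by
  have hwex : ∀ i, ∃ k, pts k = v i := fun i => hsub ⟨i, rfl⟩
  choose w hw using hwex
  obtain ⟨t, -, ht⟩ := Finset.exists_min_image Finset.univ w ⟨0, Finset.mem_univ 0⟩
  set v1 : ZMod 6 → Pt := fun i => v (i + t) with hv1
  set w1 : ZMod 6 → Fin 8 := fun i => w (i + t) with hw1
  have hw1' : ∀ i, v1 i = pts (w1 i) := fun i => (hw (i + t)).symm
  have hsp1 : IsSimplePolygon 6 v1 := rot_simple hsp t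
  have hcount1 : {i : ZMod 6 | IsConvexVtx 6 v1 i}.ncard = 3 := by
    rw [hv1, rot_count]; exact hcount
  have hw1inj : Function.Injective w1 := by
    intro i j hij
    have hv : v1 i = v1 j := by rw [hw1' i, hw1' j, hij]
    have := hsp1.inj hv
    simpa using this
  have hmin1 : ∀ i, w1 0 ≤ w1 i := by
    intro i
    simp only [hw1, zero_add]
    exact ht (i + t) (Finset.mem_univ _)
  rcases lt_or_gt_of_ne (fun h => (by decide : ((1 : ZMod 6) ≠ 5)) (hw1inj h))
      with horder | horder
  · have hlt : ∀ k : ZMod 6, k ≠ 0 → w1 0 < w1 k := fun k hk =>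
      lt_of_le_of_ne (hmin1 k) (fun h => hk (hw1inj h).symm)
    have hne : ∀ k m : ZMod 6, k ≠ m → w1 k ≠ w1 m := fun k m hkm h => hkm (hw1inj h)
    exact bridge6 v1 w1 hw1' hsp1 hcount1 (chk6 (w1 0) (w1 1) (hlt 1 (by decide)) (w1 2) (hlt 2 (by decide)) (hne 2 1 (by decide)) (w1 3) (hlt 3 (by decide)) (hne 3 1 (by decide)) (hne 3 2 (by decide)) (w1 4) (hlt 4 (by decide)) (hne 4 1 (by decide)) (hne 4 2 (by decide)) (hne 4 3 (by decide)) (w1 5) (hlt 5 (by decide)) horder (hne 5 1 (by decide)) (hne 5 2 (by decide)) (hne 5 3 (by decide)) (hne 5 4 (by decide)))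
  · set v2 : ZMod 6 → Pt := fun i => v1 (-i) with hv2
    set w2 : ZMod 6 → Fin 8 := fun i => w1 (-i) with hw2
    have hw2' : ∀ i, v2 i = pts (w2 i) := fun i => hw1' (-i)
    have hsp2 : IsSimplePolygon 6 v2 := refl_simple hsp1
    have hcount2 : {i : ZMod 6 | IsConvexVtx 6 v2 i}.ncard = 3 := by
      rw [hv2, refl_count]; exact hcount1
    have hw2inj : Function.Injective w2 := by
      intro i j hij
      have := hw1inj hij
      simpa using neg_injective this
    have hmin2 : ∀ i, w2 0 ≤ w2 i := by
      intro i
      have h0 : w2 0 = w1 0 := by rw [hw2]; norm_num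
      rw [h0]
      exact hmin1 (-i)
    have horder2 : w2 1 < w2 5 := by
      have e1 : w2 1 = w1 5 := by
        rw [hw2]; simp only []; rw [show -(1 : ZMod 6) = 5 from by decide]
      have e2 : w2 5 = w1 1 := by
        rw [hw2]; simp only []; rw [show -(5 : ZMod 6) = 1 from by decide]
      rw [e1, e2]
      exact horder
    have hlt : ∀ k : ZMod 6, k ≠ 0 → w2 0 < w2 k := fun k hk =>
      lt_of_le_of_ne (hmin2 k) (fun h => hk (hw2inj h).symm)
    have hne : ∀ k m : ZMod 6, k ≠ m → w2 k ≠ w2 m := fun k m hkm h => hkm (hw2inj h)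
    exact bridge6 v2 w2 hw2' hsp2 hcount2 (chk6 (w2 0) (w2 1) (hlt 1 (by decide)) (w2 2) (hlt 2 (by decide)) (hne 2 1 (by decide)) (w2 3) (hlt 3 (by decide)) (hne 3 1 (by decide)) (hne 3 2 (by decide)) (w2 4) (hlt 4 (by decide)) (hne 4 1 (by decide)) (hne 4 2 (by decide)) (hne 4 3 (by decide)) (w2 5) (hlt 5 (by decide)) horder2 (hne 5 1 (by decide)) (hne 5 2 (by decide)) (hne 5 3 (by decide)) (hne 5 4 (by decide)))

def A7 (a0 : Fin 8) (a1 : Fin 8) (a2 : Fin 8) (a3 : Fin 8) (a4 : Fin 8) (a5 : Fin 8) (a6 : Fin 8) : ℤ := icross (ipts a0) (ipts a1) + icross (ipts a1) (ipts a2) + icross (ipts a2) (ipts a3) + icross (ipts a3) (ipts a4) + icross (ipts a4) (ipts a5) + icross (ipts a5) (ipts a6) + icross (ipts a6) (ipts a0)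

def CP7 (a0 : Fin 8) (a1 : Fin 8) (a2 : Fin 8) (a3 : Fin 8) (a4 : Fin 8) (a5 : Fin 8) (a6 : Fin 8) : ℕ := (if 0 < V a6 a0 a1 then 1 else 0) + (if 0 < V a0 a1 a2 then 1 else 0) + (if 0 < V a1 a2 a3 then 1 else 0) + (if 0 < V a2 a3 a4 then 1 else 0) + (if 0 < V a3 a4 a5 then 1 else 0) + (if 0 < V a4 a5 a6 then 1 else 0) + (if 0 < V a5 a6 a0 then 1 else 0)

def CN7 (a0 : Fin 8) (a1 : Fin 8) (a2 : Fin 8) (a3 : Fin 8) (a4 : Fin 8) (a5 : Fin 8) (a6 : Fin 8) : ℕ := (if V a6 a0 a1 < 0 then 1 else 0) + (if V a0 a1 a2 < 0 then 1 else 0) + (if V a1 a2 a3 < 0 then 1 else 0) + (if V a2 a3 a4 < 0 then 1 else 0) + (if V a3 a4 a5 < 0 then 1 else 0) + (if V a4 a5 a6 < 0 then 1 else 0) + (if V a5 a6 a0 < 0 then 1 else 0)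

def D7 (a0 : Fin 8) (a1 : Fin 8) (a2 : Fin 8) (a3 : Fin 8) (a4 : Fin 8) (a5 : Fin 8) (a6 : Fin 8) : Prop := XT a0 a1 a2 a3 ∨ XT a0 a1 a3 a4 ∨ XT a0 a1 a4 a5 ∨ XT a0 a1 a5 a6 ∨ XT a1 a2 a3 a4 ∨ XT a1 a2 a4 a5 ∨ XT a1 a2 a5 a6 ∨ XT a1 a2 a6 a0 ∨ XT a2 a3 a4 a5 ∨ XT a2 a3 a5 a6 ∨ XT a2 a3 a6 a0 ∨ XT a3 a4 a5 a6 ∨ XT a3 a4 a6 a0 ∨ XT a4 a5 a6 a0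

instance (a0 : Fin 8) (a1 : Fin 8) (a2 : Fin 8) (a3 : Fin 8) (a4 : Fin 8) (a5 : Fin 8) (a6 : Fin 8) : Decidable (D7 a0 a1 a2 a3 a4 a5 a6) := by unfold D7; infer_instance

def B7 (a0 : Fin 8) (a1 : Fin 8) (a2 : Fin 8) (a3 : Fin 8) (a4 : Fin 8) (a5 : Fin 8) (a6 : Fin 8) : Prop :=
  (0 < A7 a0 a1 a2 a3 a4 a5 a6 → (CP7 a0 a1 a2 a3 a4 a5 a6 ≠ 3 ∨ D7 a0 a1 a2 a3 a4 a5 a6)) ∧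
  (A7 a0 a1 a2 a3 a4 a5 a6 < 0 → (CN7 a0 a1 a2 a3 a4 a5 a6 ≠ 3 ∨ D7 a0 a1 a2 a3 a4 a5 a6))

instance (a0 : Fin 8) (a1 : Fin 8) (a2 : Fin 8) (a3 : Fin 8) (a4 : Fin 8) (a5 : Fin 8) (a6 : Fin 8) : Decidable (B7 a0 a1 a2 a3 a4 a5 a6) := by unfold B7; infer_instance

lemma zsum7 {M : Type*} [AddCommMonoid M] (f : ZMod 7 → M) :
    ∑ i : ZMod 7, f i = f 0 + f 1 + f 2 + f 3 + f 4 + f 5 + f 6 := by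
  rw [show (Finset.univ : Finset (ZMod 7)) = {0,1,2,3,4,5,6} from by decide]
  rw [Finset.sum_insert (by decide)]
  rw [Finset.sum_insert (by decide)]
  rw [Finset.sum_insert (by decide)]
  rw [Finset.sum_insert (by decide)]
  rw [Finset.sum_insert (by decide)]
  rw [Finset.sum_insert (by decide)]
  rw [Finset.sum_singleton]
  abel

set_option maxRecDepth 1000000 in
set_option synthInstance.maxSize 4000 in
set_option synthInstance.maxHeartbeats 2000000 in
theorem chk7 : ∀ a0 a1 : Fin 8, a0 < a1 →
    ∀ a2, a0 < a2 → a2 ≠ a1 →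
    ∀ a3, a0 < a3 → a3 ≠ a1 → a3 ≠ a2 →
    ∀ a4, a0 < a4 → a4 ≠ a1 → a4 ≠ a2 → a4 ≠ a3 →
    ∀ a5, a0 < a5 → a5 ≠ a1 → a5 ≠ a2 → a5 ≠ a3 → a5 ≠ a4 →
    ∀ a6, a0 < a6 → a1 < a6 → a6 ≠ a1 → a6 ≠ a2 → a6 ≠ a3 → a6 ≠ a4 → a6 ≠ a5 →
    B7 a0 a1 a2 a3 a4 a5 a6 := by decide +kernel

lemma bridge7 (v : ZMod 7 → Pt) (w : ZMod 7 → Fin 8) (hw : ∀ i, v i = pts (w i))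
    (hsp : IsSimplePolygon 7 v)
    (hcount : {i : ZMod 7 | IsConvexVtx 7 v i}.ncard = 3)
    (hB : B7 (w 0) (w 1) (w 2) (w 3) (w 4) (w 5) (w 6)) : False := by
  have hA : signedArea 7 v = ((A7 (w 0) (w 1) (w 2) (w 3) (w 4) (w 5) (w 6) : ℤ) : ℝ) := by
    rw [signedArea, dif_neg (by norm_num)]
    rw [zsum7]
    simp only [show ((0 : ZMod 7) + 1) = 1 from by decide,
      show ((0 : ZMod 7) - 1) = 6 from by decide,
      show ((1 : ZMod 7) + 1) = 2 from by decide,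
      show ((1 : ZMod 7) - 1) = 0 from by decide,
      show ((2 : ZMod 7) + 1) = 3 from by decide,
      show ((2 : ZMod 7) - 1) = 1 from by decide,
      show ((3 : ZMod 7) + 1) = 4 from by decide,
      show ((3 : ZMod 7) - 1) = 2 from by decide,
      show ((4 : ZMod 7) + 1) = 5 from by decide,
      show ((4 : ZMod 7) - 1) = 3 from by decide,
      show ((5 : ZMod 7) + 1) = 6 from by decide,
      show ((5 : ZMod 7) - 1) = 4 from by decide,
      show ((6 : ZMod 7) + 1) = 0 from by decide,
      show ((6 : ZMod 7) - 1) = 5 from by decide]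
    simp only [hw, cross2_pts']
    rw [A7]
    push_cast
    ring
  have hV : ∀ i : ZMod 7, vtxCross 7 v i = ((V (w (i-1)) (w i) (w (i+1)) : ℤ) : ℝ) := by
    intro i
    rw [vtxCross, hw i, hw (i-1), hw (i+1), cross2_pts]
    rfl
  have hD : D7 (w 0) (w 1) (w 2) (w 3) (w 4) (w 5) (w 6) → False := by
    intro hd
    rcases hd with hx|hx|hx|hx|hx|hx|hx|hx|hx|hx|hx|hx|hx|hx
    · have hna := hsp.nonadj 0 2 (by decide) (by decide) (by decide)
      rw [show ((0 : ZMod 7) + 1) = 1 from by decide,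
        show ((2 : ZMod 7) + 1) = 3 from by decide] at hna
      obtain ⟨hx1, hx2⟩ := hx
      apply Set.not_nonempty_empty
      rw [← hna]
      apply segments_cross
      · rw [hw 0, hw 1, hw 2, hw 3, cross2_pts, cross2_pts, ← Int.cast_mul]
        exact_mod_cast hx1
      · rw [hw 0, hw 1, hw 2, hw 3, cross2_pts, cross2_pts, ← Int.cast_mul]
        exact_mod_cast hx2
    · have hna := hsp.nonadj 0 3 (by decide) (by decide) (by decide)
      rw [show ((0 : ZMod 7) + 1) = 1 from by decide,
        show ((3 : ZMod 7) + 1) = 4 from by decide] at hna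
      obtain ⟨hx1, hx2⟩ := hx
      apply Set.not_nonempty_empty
      rw [← hna]
      apply segments_cross
      · rw [hw 0, hw 1, hw 3, hw 4, cross2_pts, cross2_pts, ← Int.cast_mul]
        exact_mod_cast hx1
      · rw [hw 0, hw 1, hw 3, hw 4, cross2_pts, cross2_pts, ← Int.cast_mul]
        exact_mod_cast hx2
    · have hna := hsp.nonadj 0 4 (by decide) (by decide) (by decide)
      rw [show ((0 : ZMod 7) + 1) = 1 from by decide,
        show ((4 : ZMod 7) + 1) = 5 from by decide] at hna
      obtain ⟨hx1, hx2⟩ := hx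
      apply Set.not_nonempty_empty
      rw [← hna]
      apply segments_cross
      · rw [hw 0, hw 1, hw 4, hw 5, cross2_pts, cross2_pts, ← Int.cast_mul]
        exact_mod_cast hx1
      · rw [hw 0, hw 1, hw 4, hw 5, cross2_pts, cross2_pts, ← Int.cast_mul]
        exact_mod_cast hx2
    · have hna := hsp.nonadj 0 5 (by decide) (by decide) (by decide)
      rw [show ((0 : ZMod 7) + 1) = 1 from by decide,
        show ((5 : ZMod 7) + 1) = 6 from by decide] at hna
      obtain ⟨hx1, hx2⟩ := hx
      apply Set.not_nonempty_empty
      rw [← hna]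
      apply segments_cross
      · rw [hw 0, hw 1, hw 5, hw 6, cross2_pts, cross2_pts, ← Int.cast_mul]
        exact_mod_cast hx1
      · rw [hw 0, hw 1, hw 5, hw 6, cross2_pts, cross2_pts, ← Int.cast_mul]
        exact_mod_cast hx2
    · have hna := hsp.nonadj 1 3 (by decide) (by decide) (by decide)
      rw [show ((1 : ZMod 7) + 1) = 2 from by decide,
        show ((3 : ZMod 7) + 1) = 4 from by decide] at hna
      obtain ⟨hx1, hx2⟩ := hx
      apply Set.not_nonempty_empty
      rw [← hna]
      apply segments_cross
      · rw [hw 1, hw 2, hw 3, hw 4, cross2_pts, cross2_pts, ← Int.cast_mul]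
        exact_mod_cast hx1
      · rw [hw 1, hw 2, hw 3, hw 4, cross2_pts, cross2_pts, ← Int.cast_mul]
        exact_mod_cast hx2
    · have hna := hsp.nonadj 1 4 (by decide) (by decide) (by decide)
      rw [show ((1 : ZMod 7) + 1) = 2 from by decide,
        show ((4 : ZMod 7) + 1) = 5 from by decide] at hna
      obtain ⟨hx1, hx2⟩ := hx
      apply Set.not_nonempty_empty
      rw [← hna]
      apply segments_cross
      · rw [hw 1, hw 2, hw 4, hw 5, cross2_pts, cross2_pts, ← Int.cast_mul]
        exact_mod_cast hx1
      · rw [hw 1, hw 2, hw 4, hw 5, cross2_pts, cross2_pts, ← Int.cast_mul]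
        exact_mod_cast hx2
    · have hna := hsp.nonadj 1 5 (by decide) (by decide) (by decide)
      rw [show ((1 : ZMod 7) + 1) = 2 from by decide,
        show ((5 : ZMod 7) + 1) = 6 from by decide] at hna
      obtain ⟨hx1, hx2⟩ := hx
      apply Set.not_nonempty_empty
      rw [← hna]
      apply segments_cross
      · rw [hw 1, hw 2, hw 5, hw 6, cross2_pts, cross2_pts, ← Int.cast_mul]
        exact_mod_cast hx1
      · rw [hw 1, hw 2, hw 5, hw 6, cross2_pts, cross2_pts, ← Int.cast_mul]
        exact_mod_cast hx2
    · have hna := hsp.nonadj 1 6 (by decide) (by decide) (by decide)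
      rw [show ((1 : ZMod 7) + 1) = 2 from by decide,
        show ((6 : ZMod 7) + 1) = 0 from by decide] at hna
      obtain ⟨hx1, hx2⟩ := hx
      apply Set.not_nonempty_empty
      rw [← hna]
      apply segments_cross
      · rw [hw 1, hw 2, hw 6, hw 0, cross2_pts, cross2_pts, ← Int.cast_mul]
        exact_mod_cast hx1
      · rw [hw 1, hw 2, hw 6, hw 0, cross2_pts, cross2_pts, ← Int.cast_mul]
        exact_mod_cast hx2
    · have hna := hsp.nonadj 2 4 (by decide) (by decide) (by decide)
      rw [show ((2 : ZMod 7) + 1) = 3 from by decide,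
        show ((4 : ZMod 7) + 1) = 5 from by decide] at hna
      obtain ⟨hx1, hx2⟩ := hx
      apply Set.not_nonempty_empty
      rw [← hna]
      apply segments_cross
      · rw [hw 2, hw 3, hw 4, hw 5, cross2_pts, cross2_pts, ← Int.cast_mul]
        exact_mod_cast hx1
      · rw [hw 2, hw 3, hw 4, hw 5, cross2_pts, cross2_pts, ← Int.cast_mul]
        exact_mod_cast hx2
    · have hna := hsp.nonadj 2 5 (by decide) (by decide) (by decide)
      rw [show ((2 : ZMod 7) + 1) = 3 from by decide,
        show ((5 : ZMod 7) + 1) = 6 from by decide] at hna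
      obtain ⟨hx1, hx2⟩ := hx
      apply Set.not_nonempty_empty
      rw [← hna]
      apply segments_cross
      · rw [hw 2, hw 3, hw 5, hw 6, cross2_pts, cross2_pts, ← Int.cast_mul]
        exact_mod_cast hx1
      · rw [hw 2, hw 3, hw 5, hw 6, cross2_pts, cross2_pts, ← Int.cast_mul]
        exact_mod_cast hx2
    · have hna := hsp.nonadj 2 6 (by decide) (by decide) (by decide)
      rw [show ((2 : ZMod 7) + 1) = 3 from by decide,
        show ((6 : ZMod 7) + 1) = 0 from by decide] at hna
      obtain ⟨hx1, hx2⟩ := hx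
      apply Set.not_nonempty_empty
      rw [← hna]
      apply segments_cross
      · rw [hw 2, hw 3, hw 6, hw 0, cross2_pts, cross2_pts, ← Int.cast_mul]
        exact_mod_cast hx1
      · rw [hw 2, hw 3, hw 6, hw 0, cross2_pts, cross2_pts, ← Int.cast_mul]
        exact_mod_cast hx2
    · have hna := hsp.nonadj 3 5 (by decide) (by decide) (by decide)
      rw [show ((3 : ZMod 7) + 1) = 4 from by decide,
        show ((5 : ZMod 7) + 1) = 6 from by decide] at hna
      obtain ⟨hx1, hx2⟩ := hx
      apply Set.not_nonempty_empty
      rw [← hna]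
      apply segments_cross
      · rw [hw 3, hw 4, hw 5, hw 6, cross2_pts, cross2_pts, ← Int.cast_mul]
        exact_mod_cast hx1
      · rw [hw 3, hw 4, hw 5, hw 6, cross2_pts, cross2_pts, ← Int.cast_mul]
        exact_mod_cast hx2
    · have hna := hsp.nonadj 3 6 (by decide) (by decide) (by decide)
      rw [show ((3 : ZMod 7) + 1) = 4 from by decide,
        show ((6 : ZMod 7) + 1) = 0 from by decide] at hna
      obtain ⟨hx1, hx2⟩ := hx
      apply Set.not_nonempty_empty
      rw [← hna]
      apply segments_cross
      · rw [hw 3, hw 4, hw 6, hw 0, cross2_pts, cross2_pts, ← Int.cast_mul]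
        exact_mod_cast hx1
      · rw [hw 3, hw 4, hw 6, hw 0, cross2_pts, cross2_pts, ← Int.cast_mul]
        exact_mod_cast hx2
    · have hna := hsp.nonadj 4 6 (by decide) (by decide) (by decide)
      rw [show ((4 : ZMod 7) + 1) = 5 from by decide,
        show ((6 : ZMod 7) + 1) = 0 from by decide] at hna
      obtain ⟨hx1, hx2⟩ := hx
      apply Set.not_nonempty_empty
      rw [← hna]
      apply segments_cross
      · rw [hw 4, hw 5, hw 6, hw 0, cross2_pts, cross2_pts, ← Int.cast_mul]
        exact_mod_cast hx1
      · rw [hw 4, hw 5, hw 6, hw 0, cross2_pts, cross2_pts, ← Int.cast_mul]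
        exact_mod_cast hx2
  rcases lt_trichotomy (A7 (w 0) (w 1) (w 2) (w 3) (w 4) (w 5) (w 6)) 0 with hAs | hAs | hAs
  · rcases hB.2 hAs with hcnt | hd
    · apply hcnt
      have hset : {i : ZMod 7 | IsConvexVtx 7 v i}
          = ↑(Finset.univ.filter (fun i : ZMod 7 => V (w (i-1)) (w i) (w (i+1)) < 0)) := by
        ext i
        simp only [Set.mem_setOf_eq, Finset.coe_filter, Finset.mem_univ, true_and]
        rw [IsConvexVtx, hV i, hA, ← Int.cast_mul]
        rw [show (0 : ℝ) = ((0 : ℤ) : ℝ) from by norm_cast, Int.cast_lt]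
        constructor <;> intro h <;> nlinarith
      rw [hset, Set.ncard_coe_finset, Finset.card_filter, zsum7] at hcount
      simp only [show ((0 : ZMod 7) + 1) = 1 from by decide,
      show ((0 : ZMod 7) - 1) = 6 from by decide,
      show ((1 : ZMod 7) + 1) = 2 from by decide,
      show ((1 : ZMod 7) - 1) = 0 from by decide,
      show ((2 : ZMod 7) + 1) = 3 from by decide,
      show ((2 : ZMod 7) - 1) = 1 from by decide,
      show ((3 : ZMod 7) + 1) = 4 from by decide,
      show ((3 : ZMod 7) - 1) = 2 from by decide,
      show ((4 : ZMod 7) + 1) = 5 from by decide,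
      show ((4 : ZMod 7) - 1) = 3 from by decide,
      show ((5 : ZMod 7) + 1) = 6 from by decide,
      show ((5 : ZMod 7) - 1) = 4 from by decide,
      show ((6 : ZMod 7) + 1) = 0 from by decide,
      show ((6 : ZMod 7) - 1) = 5 from by decide] at hcount
      rw [CN7]
      exact hcount
    · exact hD hd
  · exfalso
    have hset : {i : ZMod 7 | IsConvexVtx 7 v i} = ∅ := by
      ext i
      simp only [Set.mem_setOf_eq, Set.mem_empty_iff_false, iff_false]
      rw [IsConvexVtx, hV i, hA, ← Int.cast_mul]
      rw [show (0 : ℝ) = ((0 : ℤ) : ℝ) from by norm_cast, Int.cast_lt, hAs, mul_zero]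
      exact lt_irrefl 0
    rw [hset] at hcount
    simp at hcount
  · rcases hB.1 hAs with hcnt | hd
    · apply hcnt
      have hset : {i : ZMod 7 | IsConvexVtx 7 v i}
          = ↑(Finset.univ.filter (fun i : ZMod 7 => 0 < V (w (i-1)) (w i) (w (i+1)))) := by
        ext i
        simp only [Set.mem_setOf_eq, Finset.coe_filter, Finset.mem_univ, true_and]
        rw [IsConvexVtx, hV i, hA, ← Int.cast_mul]
        rw [show (0 : ℝ) = ((0 : ℤ) : ℝ) from by norm_cast, Int.cast_lt]
        constructor <;> intro h <;> nlinarith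
      rw [hset, Set.ncard_coe_finset, Finset.card_filter, zsum7] at hcount
      simp only [show ((0 : ZMod 7) + 1) = 1 from by decide,
      show ((0 : ZMod 7) - 1) = 6 from by decide,
      show ((1 : ZMod 7) + 1) = 2 from by decide,
      show ((1 : ZMod 7) - 1) = 0 from by decide,
      show ((2 : ZMod 7) + 1) = 3 from by decide,
      show ((2 : ZMod 7) - 1) = 1 from by decide,
      show ((3 : ZMod 7) + 1) = 4 from by decide,
      show ((3 : ZMod 7) - 1) = 2 from by decide,
      show ((4 : ZMod 7) + 1) = 5 from by decide,
      show ((4 : ZMod 7) - 1) = 3 from by decide,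
      show ((5 : ZMod 7) + 1) = 6 from by decide,
      show ((5 : ZMod 7) - 1) = 4 from by decide,
      show ((6 : ZMod 7) + 1) = 0 from by decide,
      show ((6 : ZMod 7) - 1) = 5 from by decide] at hcount
      rw [CP7]
      exact hcount
    · exact hD hd

lemma noPT7core (v : ZMod 7 → Pt) (hsub : Set.range v ⊆ Set.range pts)
    (hsp : IsSimplePolygon 7 v)
    (hcount : {i : ZMod 7 | IsConvexVtx 7 v i}.ncard = 3) : False := by
  have hwex : ∀ i, ∃ k, pts k = v i := fun i => hsub ⟨i, rfl⟩
  choose w hw using hwex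
  obtain ⟨t, -, ht⟩ := Finset.exists_min_image Finset.univ w ⟨0, Finset.mem_univ 0⟩
  set v1 : ZMod 7 → Pt := fun i => v (i + t) with hv1
  set w1 : ZMod 7 → Fin 8 := fun i => w (i + t) with hw1
  have hw1' : ∀ i, v1 i = pts (w1 i) := fun i => (hw (i + t)).symm
  have hsp1 : IsSimplePolygon 7 v1 := rot_simple hsp t
  have hcount1 : {i : ZMod 7 | IsConvexVtx 7 v1 i}.ncard = 3 := by
    rw [hv1, rot_count]; exact hcount
  have hw1inj : Function.Injective w1 := by
    intro i j hij
    have hv : v1 i = v1 j := by rw [hw1' i, hw1' j, hij]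
    have := hsp1.inj hv
    simpa using this
  have hmin1 : ∀ i, w1 0 ≤ w1 i := by
    intro i
    simp only [hw1, zero_add]
    exact ht (i + t) (Finset.mem_univ _)
  rcases lt_or_gt_of_ne (fun h => (by decide : ((1 : ZMod 7) ≠ 6)) (hw1inj h))
      with horder | horder
  · have hlt : ∀ k : ZMod 7, k ≠ 0 → w1 0 < w1 k := fun k hk =>
      lt_of_le_of_ne (hmin1 k) (fun h => hk (hw1inj h).symm)
    have hne : ∀ k m : ZMod 7, k ≠ m → w1 k ≠ w1 m := fun k m hkm h => hkm (hw1inj h)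
    exact bridge7 v1 w1 hw1' hsp1 hcount1 (chk7 (w1 0) (w1 1) (hlt 1 (by decide)) (w1 2) (hlt 2 (by decide)) (hne 2 1 (by decide)) (w1 3) (hlt 3 (by decide)) (hne 3 1 (by decide)) (hne 3 2 (by decide)) (w1 4) (hlt 4 (by decide)) (hne 4 1 (by decide)) (hne 4 2 (by decide)) (hne 4 3 (by decide)) (w1 5) (hlt 5 (by decide)) (hne 5 1 (by decide)) (hne 5 2 (by decide)) (hne 5 3 (by decide)) (hne 5 4 (by decide)) (w1 6) (hlt 6 (by decide)) horder (hne 6 1 (by decide)) (hne 6 2 (by decide)) (hne 6 3 (by decide)) (hne 6 4 (by decide)) (hne 6 5 (by decide)))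
  · set v2 : ZMod 7 → Pt := fun i => v1 (-i) with hv2
    set w2 : ZMod 7 → Fin 8 := fun i => w1 (-i) with hw2
    have hw2' : ∀ i, v2 i = pts (w2 i) := fun i => hw1' (-i)
    have hsp2 : IsSimplePolygon 7 v2 := refl_simple hsp1
    have hcount2 : {i : ZMod 7 | IsConvexVtx 7 v2 i}.ncard = 3 := by
      rw [hv2, refl_count]; exact hcount1
    have hw2inj : Function.Injective w2 := by
      intro i j hij
      have := hw1inj hij
      simpa using neg_injective this
    have hmin2 : ∀ i, w2 0 ≤ w2 i := by
      intro i
      have h0 : w2 0 = w1 0 := by rw [hw2]; norm_num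
      rw [h0]
      exact hmin1 (-i)
    have horder2 : w2 1 < w2 6 := by
      have e1 : w2 1 = w1 6 := by
        rw [hw2]; simp only []; rw [show -(1 : ZMod 7) = 6 from by decide]
      have e2 : w2 6 = w1 1 := by
        rw [hw2]; simp only []; rw [show -(6 : ZMod 7) = 1 from by decide]
      rw [e1, e2]
      exact horder
    have hlt : ∀ k : ZMod 7, k ≠ 0 → w2 0 < w2 k := fun k hk =>
      lt_of_le_of_ne (hmin2 k) (fun h => hk (hw2inj h).symm)
    have hne : ∀ k m : ZMod 7, k ≠ m → w2 k ≠ w2 m := fun k m hkm h => hkm (hw2inj h)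
    exact bridge7 v2 w2 hw2' hsp2 hcount2 (chk7 (w2 0) (w2 1) (hlt 1 (by decide)) (w2 2) (hlt 2 (by decide)) (hne 2 1 (by decide)) (w2 3) (hlt 3 (by decide)) (hne 3 1 (by decide)) (hne 3 2 (by decide)) (w2 4) (hlt 4 (by decide)) (hne 4 1 (by decide)) (hne 4 2 (by decide)) (hne 4 3 (by decide)) (w2 5) (hlt 5 (by decide)) (hne 5 1 (by decide)) (hne 5 2 (by decide)) (hne 5 3 (by decide)) (hne 5 4 (by decide)) (w2 6) (hlt 6 (by decide)) horder2 (hne 6 1 (by decide)) (hne 6 2 (by decide)) (hne 6 3 (by decide)) (hne 6 4 (by decide)) (hne 6 5 (by decide)))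

set_option maxRecDepth 100000 in
theorem c5 : ∀ I : Finset (Fin 8), I.card = 5 → ∃ q a b c : Fin 8,
    a ∈ I ∧ b ∈ I ∧ c ∈ I ∧ inT q a b c ∧ (q ∈ I → q ≠ a ∧ q ≠ b ∧ q ≠ c) := by decide +kernel

set_option maxRecDepth 100000 in
theorem gen8 : ∀ i j k : Fin 8, i ≠ j → i ≠ k → j ≠ k →
    icross (ipts j - ipts i) (ipts k - ipts i) ≠ 0 := by decide +kernel

lemma cross2_pos_of_inT {q a b c : Fin 8} (h : inT q a b c) :
    0 < cross2 (pts b - pts a) (pts q - pts a) ∧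
    0 < cross2 (pts c - pts b) (pts q - pts b) ∧
    0 < cross2 (pts a - pts c) (pts q - pts c) := by
  obtain ⟨h1, h2, h3⟩ := h
  refine ⟨?_, ?_, ?_⟩ <;> rw [cross2_pts] <;> exact_mod_cast ‹_›

lemma no5hole : ¬ HasHole 5 (Set.range pts) := by
  rintro ⟨H, hHS, hcard, hconv, hcl⟩
  classical
  set I : Finset (Fin 8) := Finset.univ.filter (fun i => pts i ∈ H) with hI
  have hHI : H = pts '' ↑I := by
    ext x
    constructor
    · intro hx
      obtain ⟨i, rfl⟩ := hHS hx
      exact ⟨i, by simp [hI, hx], rfl⟩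
    · rintro ⟨i, hi, rfl⟩
      simp only [hI, Finset.coe_filter, Finset.mem_univ, true_and, Set.mem_setOf_eq] at hi
      exact hi
  have hcardI : I.card = 5 := by
    rw [hHI, Set.ncard_image_of_injective _ pts_inj, Set.ncard_coe_finset] at hcard
    exact hcard
  obtain ⟨q, a, b, c, ha, hb, hc, hins, hq⟩ := c5 I hcardI
  obtain ⟨o1, o2, o3⟩ := cross2_pos_of_inT hins
  have htri : ({pts a, pts b, pts c} : Set Pt) ⊆ H := by
    rintro x (rfl | rfl | rfl)
    · exact hHI ▸ ⟨a, ha, rfl⟩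
    · exact hHI ▸ ⟨b, hb, rfl⟩
    · exact hHI ▸ ⟨c, hc, rfl⟩
  by_cases hqI : q ∈ I
  · obtain ⟨hqa, hqb, hqc⟩ := hq hqI
    have hpH : pts q ∈ H := hHI ▸ ⟨q, hqI, rfl⟩
    apply hconv (pts q) hpH
    have hsub : ({pts a, pts b, pts c} : Set Pt) ⊆ H \ {pts q} := by
      rintro x (rfl | rfl | rfl)
      · exact ⟨htri (by simp), fun h => hqa (pts_inj (Set.mem_singleton_iff.mp h)).symm⟩
      · exact ⟨htri (by simp), fun h => hqb (pts_inj (Set.mem_singleton_iff.mp h)).symm⟩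
      · exact ⟨htri (by simp), fun h => hqc (pts_inj (Set.mem_singleton_iff.mp h)).symm⟩
    exact convexHull_mono hsub (mem_convexHull_triangle o1 o2 o3)
  · have hqS : pts q ∈ Set.range pts := ⟨q, rfl⟩
    have hint : pts q ∈ interior (convexHull ℝ H) :=
      interior_mono (convexHull_mono htri) (mem_interior_triangle o1 o2 o3)
    have := hcl (pts q) hqS hint
    rw [hHI] at this
    obtain ⟨i, hi, hiq⟩ := this
    exact hqI (by rwa [pts_inj hiq] at hi)

lemma genpos : GenPos (Set.range pts) := by
  rintro p ⟨i, rfl⟩ q ⟨j, rfl⟩ r ⟨k, rfl⟩ hpq hpr hqr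
  apply not_collinear_of_cross2
  rw [cross2_pts]
  have hij : i ≠ j := fun h => hpq (by rw [h])
  have hik : i ≠ k := fun h => hpr (by rw [h])
  have hjk : j ≠ k := fun h => hqr (by rw [h])
  exact_mod_cast gen8 i j k hij hik hjk

end S10

/-- there is a set of 8 points in general position with no 5-hole, no
empty 6-pseudo-triangle and no empty 7-pseudo-triangle. -/
theorem statement_10 :
    ∃ S : Set Pt, S.Finite ∧ S.ncard = 8 ∧ GenPos S ∧
      ¬ HasHole 5 S ∧ ¬ HasEmptyPseudoTriangle 6 S ∧ ¬ HasEmptyPseudoTriangle 7 S := by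
  refine ⟨Set.range S10.pts, Set.finite_range _, ?_, S10.genpos, S10.no5hole, ?_, ?_⟩
  · rw [← Set.image_univ, Set.ncard_image_of_injective _ S10.pts_inj, Set.ncard_univ]
    simp
  · rintro ⟨v, hsub, ⟨hsp, -, hcount⟩, -⟩
    exact S10.noPT6core v hsub hsp hcount
  · rintro ⟨v, hsub, ⟨hsp, -, hcount⟩, -⟩
    exact S10.noPT7core v hsub hsp hcount
end
end

section
/- Let k ≥ 3 and ℓ ≥ 0 be integers. Every ℓ-convex set of at least (k − 3)(ℓ + 1) + 3 points in the plane in general position contains k points in convex position. -/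
open Set

noncomputable section

section Aux

open Set

lemma cross2_self (x : Pt) : cross2 x x = 0 := by simp [cross2]; ring

lemma cross2_zero_right (x : Pt) : cross2 x 0 = 0 := by simp [cross2]

lemma collinear_of_cross2 {p q r : Pt} (hqp : q ≠ p) (h : cross2 (q - p) (r - p) = 0) :
    Collinear ℝ ({p, q, r} : Set Pt) := by
  set d : Pt := q - p with hd
  have hd0 : d ≠ 0 := sub_ne_zero.2 hqp
  set e : Pt := r - p with he
  have hcr : d.1 * e.2 = d.2 * e.1 := by
    have := h
    simp only [cross2, ← hd, ← he] at this
    linarith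
  have key : ∃ c : ℝ, e = c • d := by
    by_cases h1 : d.1 ≠ 0
    · refine ⟨e.1 / d.1, ?_⟩
      apply Prod.ext
      · simp [Prod.smul_fst, smul_eq_mul]; field_simp
      · simp only [Prod.smul_snd, smul_eq_mul]
        field_simp
        nlinarith [hcr]
    · push_neg at h1
      have h2 : d.2 ≠ 0 := by
        intro h2; exact hd0 (Prod.ext h1 h2)
      refine ⟨e.2 / d.2, ?_⟩
      apply Prod.ext
      · simp only [Prod.smul_fst, smul_eq_mul]
        have : e.1 = 0 := by
          have : d.2 * e.1 = 0 := by rw [← hcr, h1]; ring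
          exact (mul_eq_zero.1 this).resolve_left h2
        simp [this, h1]
      · simp only [Prod.smul_snd, smul_eq_mul]; field_simp
  obtain ⟨c, hc⟩ := key
  apply collinear_iff_of_mem (show p ∈ ({p, q, r} : Set Pt) by simp) |>.2
  refine ⟨d, ?_⟩
  intro x hx
  rcases hx with rfl | rfl | rfl
  · exact ⟨0, by simp⟩
  · exact ⟨1, by simp [hd]⟩
  · refine ⟨c, ?_⟩
    have : x - p = c • d := hc
    have := this
    rw [sub_eq_iff_eq_add] at this
    simpa [vadd_eq_add] using this

lemma cross2_of_collinear {p q r : Pt} (h : Collinear ℝ ({p, q, r} : Set Pt)) :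
    cross2 (q - p) (r - p) = 0 := by
  rw [collinear_iff_of_mem (show p ∈ ({p, q, r} : Set Pt) by simp)] at h
  obtain ⟨v, hv⟩ := h
  obtain ⟨a, ha⟩ := hv q (by simp)
  obtain ⟨b, hb⟩ := hv r (by simp)
  have hq : q - p = a • v := by rw [ha]; simp [vadd_eq_add]
  have hr : r - p = b • v := by rw [hb]; simp [vadd_eq_add]
  rw [hq, hr]
  simp [cross2, Prod.smul_fst, Prod.smul_snd, smul_eq_mul]
  ring

/-- From general position: distinct triples have nonzero cross. -/
lemma GenPos.cross_ne {S : Set Pt} (hgp : GenPos S) {p q r : Pt}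
    (hp : p ∈ S) (hq : q ∈ S) (hr : r ∈ S) (hpq : p ≠ q) (hpr : p ≠ r) (hqr : q ≠ r) :
    cross2 (q - p) (r - p) ≠ 0 := fun h =>
  hgp p hp q hq r hr hpq hpr hqr (collinear_of_cross2 hpq.symm h)

end Aux
section Hull

open Set

lemma hullVertices_subset (S : Set Pt) : hullVertices S ⊆ S := fun _ h => h.1

lemma subset_convexHull_hullVertices {S : Set Pt} (hfin : S.Finite) :
    S ⊆ convexHull ℝ (hullVertices S) := by
  have hcomp : IsCompact (convexHull ℝ S) := hfin.isCompact_convexHull ℝ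
  have hconv : Convex ℝ (convexHull ℝ S) := convex_convexHull ℝ S
  have hKM := closure_convexHull_extremePoints hcomp hconv
  have hEsub : (convexHull ℝ S).extremePoints ℝ ⊆ S := extremePoints_convexHull_subset
  have hEfin : ((convexHull ℝ S).extremePoints ℝ).Finite := hfin.subset hEsub
  have hclosed : IsClosed (convexHull ℝ ((convexHull ℝ S).extremePoints ℝ)) :=
    hEfin.isClosed_convexHull ℝ
  have heq : convexHull ℝ ((convexHull ℝ S).extremePoints ℝ) = convexHull ℝ S := by
    rw [← hclosed.closure_eq]; exact hKM
  have hEhv : (convexHull ℝ S).extremePoints ℝ ⊆ hullVertices S := by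
    intro x hx
    refine ⟨hEsub hx, ?_⟩
    have := hconv.mem_extremePoints_iff_mem_diff_convexHull_diff.1 hx
    intro hmem
    exact this.2 (convexHull_mono (diff_subset_diff_left (subset_convexHull ℝ S)) hmem)
  calc S ⊆ convexHull ℝ S := subset_convexHull ℝ S
    _ = convexHull ℝ ((convexHull ℝ S).extremePoints ℝ) := heq.symm
    _ ⊆ convexHull ℝ (hullVertices S) := convexHull_mono hEhv

lemma collinear_convexHull {V : Set Pt} (h : Collinear ℝ V) :
    Collinear ℝ (convexHull ℝ V) := by
  unfold Collinear at h ⊢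
  rwa [← direction_affineSpan, affineSpan_convexHull, direction_affineSpan]

lemma three_le_hullVertices_ncard {S : Set Pt} (hfin : S.Finite) (hgp : GenPos S)
    (h3 : 3 ≤ S.ncard) : 3 ≤ (hullVertices S).ncard := by
  by_contra hlt
  push_neg at hlt
  have hVfin : (hullVertices S).Finite := hfin.subset (hullVertices_subset S)
  have hcol : Collinear ℝ (hullVertices S) := by
    interval_cases h : (hullVertices S).ncard
    · rw [(Set.ncard_eq_zero (by exact hVfin)).1 h]
      exact collinear_empty ℝ _
    · obtain ⟨a, ha⟩ := Set.ncard_eq_one.1 h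
      rw [ha]; exact collinear_singleton ℝ _
    · obtain ⟨a, b, _, hab⟩ := Set.ncard_eq_two.1 h
      rw [hab]; exact collinear_pair ℝ _ _
  have hScol : Collinear ℝ S :=
    (collinear_convexHull hcol).subset (subset_convexHull_hullVertices hfin)
  obtain ⟨t, hts, htcard⟩ := Set.exists_subset_card_eq h3
  obtain ⟨p, q, r, hpq, hpr, hqr, rfl⟩ := Set.ncard_eq_three.1 htcard
  exact hgp p (hts (by simp)) q (hts (by simp)) r (hts (by simp)) hpq hpr hqr
    (hScol.subset hts)

end Hull
section Halfplane

open Set Filter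

lemma cross2_combo (e p y z : Pt) {a b : ℝ} (hab : a + b = 1) :
    cross2 e ((a • y + b • z) - p) = a * cross2 e (y - p) + b * cross2 e (z - p) := by
  have hb : b = 1 - a := by linarith
  subst hb
  simp only [cross2, Prod.fst_add, Prod.snd_add, Prod.fst_sub, Prod.snd_sub,
    Prod.smul_fst, Prod.smul_snd, smul_eq_mul]
  ring

lemma continuous_crossfun (e p : Pt) (c : ℝ) :
    Continuous (fun y : Pt => c * cross2 e (y - p)) := by
  have : (fun y : Pt => c * cross2 e (y - p)) =
      fun y : Pt => c * (e.1 * (y.2 - p.2) - e.2 * (y.1 - p.1)) := by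
    funext y; simp [cross2]
  rw [this]
  fun_prop

lemma convex_cross_halfplane (e p : Pt) (c : ℝ) :
    Convex ℝ {y : Pt | 0 ≤ c * cross2 e (y - p)} := by
  intro x hx z hz a b ha hb hab
  simp only [mem_setOf_eq] at hx hz ⊢
  rw [cross2_combo e p x z hab]
  nlinarith

lemma interior_cross_halfplane {e : Pt} (he : e ≠ 0) (p : Pt) {c : ℝ} (hc : c ≠ 0) :
    interior {y : Pt | 0 ≤ c * cross2 e (y - p)} ⊆ {y : Pt | 0 < c * cross2 e (y - p)} := by
  intro y hy
  simp only [mem_setOf_eq]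
  have hy0' : y ∈ {y : Pt | 0 ≤ c * cross2 e (y - p)} := interior_subset hy
  have hy0 : (0:ℝ) ≤ c * cross2 e (y - p) := hy0'
  rcases lt_or_eq_of_le hy0 with h | h
  · exact h
  exfalso
  set n : Pt := c • (-e.2, e.1) with hn
  have ht : Tendsto (fun ε : ℝ => y - ε • n) (nhdsWithin 0 (Set.Ioi 0)) (nhds y) := by
    have hcont : Continuous (fun ε : ℝ => y - ε • n) := by fun_prop
    have := hcont.tendsto 0
    simp only [zero_smul, sub_zero] at this
    exact this.mono_left nhdsWithin_le_nhds
  have hmem : interior {y : Pt | 0 ≤ c * cross2 e (y - p)} ∈ nhds y :=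
    isOpen_interior.mem_nhds hy
  have hev : ∀ᶠ ε in nhdsWithin (0:ℝ) (Set.Ioi 0),
      (y - ε • n) ∈ interior {y : Pt | 0 ≤ c * cross2 e (y - p)} :=
    ht.eventually_mem hmem
  have hpos : ∀ᶠ ε in nhdsWithin (0:ℝ) (Set.Ioi 0), (0:ℝ) < ε :=
    eventually_mem_nhdsWithin
  haveI : (nhdsWithin (0:ℝ) (Set.Ioi 0)).NeBot := nhdsGT_neBot 0
  obtain ⟨ε, hmemε, hεpos⟩ := (hev.and hpos).exists
  have hval : c * cross2 e ((y - ε • n) - p)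
      = c * cross2 e (y - p) - ε * (c^2 * (e.1^2 + e.2^2)) := by
    simp only [cross2, hn, Prod.fst_sub, Prod.snd_sub, Prod.smul_fst, Prod.smul_snd,
      smul_eq_mul, Prod.mk.injEq]
    ring
  have hE : 0 < e.1^2 + e.2^2 := by
    have h12 : e.1 ≠ 0 ∨ e.2 ≠ 0 := by
      by_contra hbb; push_neg at hbb; exact he (Prod.ext hbb.1 hbb.2)
    rcases h12 with h1 | h2
    · positivity
    · positivity
  have hle' : (y - ε • n) ∈ {y : Pt | 0 ≤ c * cross2 e (y - p)} := interior_subset hmemε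
  have hle : (0:ℝ) ≤ c * cross2 e ((y - ε • n) - p) := hle'
  rw [hval, ← h] at hle
  have hc2 : 0 < c^2 := by positivity
  nlinarith [mul_pos hεpos (mul_pos hc2 hE)]

end Halfplane
section Triangle

open Set

lemma cross2_zero_left (x : Pt) : cross2 0 x = 0 := by simp [cross2]

lemma cross2_anticomm' (x y : Pt) : cross2 x y = -cross2 y x := by simp [cross2]; ring

/-- Representation of a point of a triangle as a convex combination. -/
lemma tri_rep {u v w y : Pt} (hy : y ∈ convexHull ℝ ({u, v, w} : Set Pt)) :
    ∃ a b c : ℝ, 0 ≤ a ∧ 0 ≤ b ∧ 0 ≤ c ∧ a + b + c = 1 ∧ y = a • u + b • v + c • w := by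
  rw [show ({u, v, w} : Set Pt) = insert u {v, w} from rfl,
    convexHull_insert ⟨v, by simp⟩] at hy
  rw [mem_convexJoin] at hy
  obtain ⟨x, hx, z, hz, hyz⟩ := hy
  rw [Set.mem_singleton_iff] at hx
  subst hx
  rw [convexHull_pair] at hz
  have hz' := hz
  have hyz' := hyz
  obtain ⟨cz, dz, hcz, hdz, hcdz, hzeq⟩ := hz'
  obtain ⟨a, b, ha, hb, hab, hyeq⟩ := hyz'
  refine ⟨a, b * cz, b * dz, ha, by positivity, by positivity, by nlinarith, ?_⟩
  rw [← hyeq, ← hzeq, smul_add, smul_smul, smul_smul, add_assoc]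

lemma combo_mem_tri {u v w : Pt} {a b c : ℝ} (ha : 0 ≤ a) (hb : 0 ≤ b) (hc : 0 ≤ c)
    (habc : a + b + c = 1) : a • u + b • v + c • w ∈ convexHull ℝ ({u, v, w} : Set Pt) := by
  by_cases h : b + c = 0
  · have hb0 : b = 0 := by linarith
    have hc0 : c = 0 := by linarith
    have ha1 : a = 1 := by linarith
    rw [hb0, hc0, ha1]
    simpa using subset_convexHull ℝ ({u,v,w} : Set Pt) (by simp)
  · have hbc : 0 < b + c := lt_of_le_of_ne (by linarith) (Ne.symm h)
    set z := (b / (b + c)) • v + (c / (b + c)) • w with hz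
    have hzmem : z ∈ convexHull ℝ ({u, v, w} : Set Pt) :=
      (convex_convexHull ℝ _) (subset_convexHull ℝ _ (by simp))
        (subset_convexHull ℝ _ (by simp)) (by positivity) (by positivity) (by field_simp)
    have h1 : (b + c) • z = b • v + c • w := by
      rw [hz, smul_add, smul_smul, smul_smul]
      have e1 : (b + c) * (b / (b + c)) = b := by field_simp
      have e2 : (b + c) * (c / (b + c)) = c := by field_simp
      rw [e1, e2]
    have h2 : a • u + b • v + c • w = a • u + (b + c) • z := by rw [h1, add_assoc]
    rw [h2]
    exact (convex_convexHull ℝ _) (subset_convexHull ℝ _ (by simp)) hzmem ha hbc.le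
      (by linarith)

lemma cramer_tri {u v w y : Pt} (hD : cross2 (w - v) (u - v) ≠ 0) :
    (cross2 (w - v) (y - v) / cross2 (w - v) (u - v)) • u
      + (1 - cross2 (w - v) (y - v) / cross2 (w - v) (u - v)
          - cross2 (y - v) (u - v) / cross2 (w - v) (u - v)) • v
      + (cross2 (y - v) (u - v) / cross2 (w - v) (u - v)) • w = y := by
  simp only [cross2, Prod.fst_sub, Prod.snd_sub] at hD
  apply Prod.ext <;>
  · simp only [cross2, Prod.fst_add, Prod.snd_add, Prod.fst_sub, Prod.snd_sub,
      Prod.smul_fst, Prod.smul_snd, smul_eq_mul]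
    field_simp
    ring

lemma evalA {u v w : Pt} {a b c : ℝ} (habc : a + b + c = 1) (y : Pt) (hy : y = a • u + b • v + c • w) :
    cross2 (w - v) (y - v) = a * cross2 (w - v) (u - v) := by
  have hb : b = 1 - a - c := by linarith
  subst hb hy
  simp only [cross2, Prod.fst_add, Prod.snd_add, Prod.fst_sub, Prod.snd_sub,
    Prod.smul_fst, Prod.smul_snd, smul_eq_mul]
  ring

lemma evalC {u v w : Pt} {a b c : ℝ} (habc : a + b + c = 1) (y : Pt) (hy : y = a • u + b • v + c • w) :
    cross2 (y - v) (u - v) = c * cross2 (w - v) (u - v) := by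
  have hb : b = 1 - a - c := by linarith
  subst hb hy
  simp only [cross2, Prod.fst_add, Prod.snd_add, Prod.fst_sub, Prod.snd_sub,
    Prod.smul_fst, Prod.smul_snd, smul_eq_mul]
  ring

lemma B_identity {u v w y : Pt} (hD : cross2 (w - v) (u - v) ≠ 0) :
    1 - cross2 (w - v) (y - v) / cross2 (w - v) (u - v)
      - cross2 (y - v) (u - v) / cross2 (w - v) (u - v)
      = -cross2 (w - u) (y - u) / cross2 (w - v) (u - v) := by
  simp only [cross2, Prod.fst_sub, Prod.snd_sub] at hD ⊢
  field_simp
  ring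

lemma tri_ne_of_D {u v w : Pt} (hD : cross2 (w - v) (u - v) ≠ 0) :
    u ≠ v ∧ w ≠ v ∧ u ≠ w := by
  refine ⟨?_, ?_, ?_⟩ <;> intro h
  · apply hD; rw [h]; simp [cross2]
  · apply hD; rw [h]; simp [cross2]
  · apply hD; rw [h]; simp [cross2]; ring

lemma tri_subset_halfplane {u v w : Pt} (e q : Pt) (c : ℝ)
    (h1 : 0 ≤ c * cross2 e (u - q)) (h2 : 0 ≤ c * cross2 e (v - q))
    (h3 : 0 ≤ c * cross2 e (w - q)) :
    convexHull ℝ ({u, v, w} : Set Pt) ⊆ {y : Pt | 0 ≤ c * cross2 e (y - q)} := by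
  apply convexHull_min _ (convex_cross_halfplane e q c)
  intro x hx
  rcases hx with rfl | rfl | rfl <;> assumption

lemma interior_tri_pos {u v w y : Pt} (hD : cross2 (w - v) (u - v) ≠ 0)
    (hy : y ∈ interior (convexHull ℝ ({u, v, w} : Set Pt))) :
    0 < cross2 (w - v) (y - v) / cross2 (w - v) (u - v)
    ∧ 0 < 1 - cross2 (w - v) (y - v) / cross2 (w - v) (u - v)
        - cross2 (y - v) (u - v) / cross2 (w - v) (u - v)
    ∧ 0 < cross2 (y - v) (u - v) / cross2 (w - v) (u - v) := by
  obtain ⟨huv, hwv, huw⟩ := tri_ne_of_D hD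
  set D := cross2 (w - v) (u - v) with hDdef
  have hDinv : D⁻¹ ≠ 0 := inv_ne_zero hD
  have hwv0 : w - v ≠ (0 : Pt) := sub_ne_zero.2 hwv
  have huv0 : u - v ≠ (0 : Pt) := sub_ne_zero.2 huv
  have hwu0 : w - u ≠ (0 : Pt) := sub_ne_zero.2 huw.symm
  have hDD : D⁻¹ * D = 1 := inv_mul_cancel₀ hD
  have hanti : cross2 (u - v) (w - v) = -D := by
    simp only [hDdef, cross2, Prod.fst_sub, Prod.snd_sub]; ring
  have hwuv : cross2 (w - u) (v - u) = -D := by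
    simp only [hDdef, cross2, Prod.fst_sub, Prod.snd_sub]; ring
  -- A
  have hsubA : convexHull ℝ ({u, v, w} : Set Pt) ⊆ {y : Pt | 0 ≤ D⁻¹ * cross2 (w - v) (y - v)} := by
    apply tri_subset_halfplane
    · rw [← hDdef, hDD]; norm_num
    · simp [cross2_zero_right]
    · rw [cross2_self]; norm_num
  have hA : 0 < D⁻¹ * cross2 (w - v) (y - v) :=
    interior_cross_halfplane hwv0 v hDinv (interior_mono hsubA hy)
  -- C
  have hsubC : convexHull ℝ ({u, v, w} : Set Pt) ⊆ {y : Pt | 0 ≤ (-D⁻¹) * cross2 (u - v) (y - v)} := by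
    apply tri_subset_halfplane
    · rw [cross2_self]; norm_num
    · simp [cross2_zero_right]
    · rw [hanti]; rw [neg_mul, mul_neg, neg_neg, hDD]; norm_num
  have hC' : 0 < (-D⁻¹) * cross2 (u - v) (y - v) :=
    interior_cross_halfplane huv0 v (neg_ne_zero.2 hDinv) (interior_mono hsubC hy)
  -- B
  have hsubB : convexHull ℝ ({u, v, w} : Set Pt) ⊆ {y : Pt | 0 ≤ (-D⁻¹) * cross2 (w - u) (y - u)} := by
    apply tri_subset_halfplane
    · simp [cross2_zero_right]
    · rw [hwuv]; rw [neg_mul, mul_neg, neg_neg, hDD]; norm_num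
    · rw [cross2_self]; norm_num
  have hB' : 0 < (-D⁻¹) * cross2 (w - u) (y - u) :=
    interior_cross_halfplane hwu0 u (neg_ne_zero.2 hDinv) (interior_mono hsubB hy)
  refine ⟨?_, ?_, ?_⟩
  · rw [div_eq_inv_mul]; exact hA
  · rw [B_identity hD]
    have heq : -cross2 (w - u) (y - u) / D = (-D⁻¹) * cross2 (w - u) (y - u) := by
      rw [neg_div, div_eq_inv_mul, neg_mul]
    rw [heq]; exact hB'
  · have heq : cross2 (y - v) (u - v) / D = (-D⁻¹) * cross2 (u - v) (y - v) := by
      rw [cross2_anticomm' (y - v) (u - v), neg_div, div_eq_inv_mul, neg_mul]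
    rw [heq]; exact hC'
  
lemma pos_tri_interior {u v w y : Pt} (hD : cross2 (w - v) (u - v) ≠ 0)
    (h1 : 0 < cross2 (w - v) (y - v) / cross2 (w - v) (u - v))
    (h2 : 0 < 1 - cross2 (w - v) (y - v) / cross2 (w - v) (u - v)
        - cross2 (y - v) (u - v) / cross2 (w - v) (u - v))
    (h3 : 0 < cross2 (y - v) (u - v) / cross2 (w - v) (u - v)) :
    y ∈ interior (convexHull ℝ ({u, v, w} : Set Pt)) := by
  set D := cross2 (w - v) (u - v) with hDdef
  set O : Set Pt := {z : Pt | 0 < D⁻¹ * cross2 (w - v) (z - v)}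
    ∩ ({z : Pt | 0 < -(D⁻¹ * cross2 (w - v) (z - v)) - (D⁻¹ * cross2 (z - v) (u - v)) + 1}
    ∩ {z : Pt | 0 < D⁻¹ * cross2 (z - v) (u - v)}) with hO
  have hOopen : IsOpen O := by
    apply IsOpen.inter
    · have : Continuous fun z : Pt => D⁻¹ * cross2 (w - v) (z - v) := continuous_crossfun _ _ _
      exact isOpen_lt continuous_const this
    apply IsOpen.inter
    · have hc1 : Continuous fun z : Pt => D⁻¹ * cross2 (w - v) (z - v) := continuous_crossfun _ _ _
      have hc2 : Continuous fun z : Pt => cross2 (z - v) (u - v) := by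
        have : (fun z : Pt => cross2 (z - v) (u - v))
            = fun z : Pt => -((u-v).1 * (z.2 - v.2) - (u-v).2 * (z.1 - v.1)) := by
          funext z
          simp only [cross2, Prod.fst_sub, Prod.snd_sub]; ring
        rw [this]; fun_prop
      have : Continuous fun z : Pt =>
          -(D⁻¹ * cross2 (w - v) (z - v)) - (D⁻¹ * cross2 (z - v) (u - v)) + 1 := by
        fun_prop
      exact isOpen_lt continuous_const this
    · have hc2 : Continuous fun z : Pt => D⁻¹ * cross2 (z - v) (u - v) := by
        have : (fun z : Pt => D⁻¹ * cross2 (z - v) (u - v))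
            = fun z : Pt => D⁻¹ * -((u-v).1 * (z.2 - v.2) - (u-v).2 * (z.1 - v.1)) := by
          funext z
          simp only [cross2, Prod.fst_sub, Prod.snd_sub]; ring
        rw [this]; fun_prop
      exact isOpen_lt continuous_const hc2
  have hOsub : O ⊆ convexHull ℝ ({u, v, w} : Set Pt) := by
    rintro z ⟨hz1, hz2, hz3⟩
    simp only [mem_setOf_eq] at hz1 hz2 hz3
    have hz1' : 0 < cross2 (w - v) (z - v) / D := by rwa [div_eq_inv_mul]
    have hz3' : 0 < cross2 (z - v) (u - v) / D := by rwa [div_eq_inv_mul]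
    have hz2' : 0 ≤ 1 - cross2 (w - v) (z - v) / D - cross2 (z - v) (u - v) / D := by
      rw [div_eq_inv_mul, div_eq_inv_mul]; linarith
    have := cramer_tri (u := u) (v := v) (w := w) (y := z) hD
    rw [← this]
    exact combo_mem_tri hz1'.le hz2' hz3'.le (by ring)
  have hyO : y ∈ O := by
    refine ⟨?_, ?_, ?_⟩ <;> simp only [mem_setOf_eq]
    · rwa [← div_eq_inv_mul]
    · rw [div_eq_inv_mul, div_eq_inv_mul] at h2; linarith
    · rwa [← div_eq_inv_mul]
  exact interior_maximal hOsub hOopen hyO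

lemma collinear_of_mem_segment {x y p : Pt} (hxy : x ≠ y) (hp : p ∈ segment ℝ x y) :
    Collinear ℝ ({x, y, p} : Set Pt) := by
  obtain ⟨a, b, ha, hb, hab, hpeq⟩ := hp
  apply collinear_of_cross2 hxy.symm
  have hpx : p - x = b • (y - x) := by
    rw [← hpeq]
    apply Prod.ext
    · simp only [Prod.fst_add, Prod.snd_add, Prod.fst_sub, Prod.snd_sub,
        Prod.smul_fst, Prod.smul_snd, smul_eq_mul]
      linear_combination x.1 * hab
    · simp only [Prod.fst_add, Prod.snd_add, Prod.fst_sub, Prod.snd_sub,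
        Prod.smul_fst, Prod.smul_snd, smul_eq_mul]
      linear_combination x.2 * hab
  rw [hpx]
  simp only [cross2, Prod.smul_fst, Prod.smul_snd, smul_eq_mul]
  ring

lemma tri_frontier_seg {u v w p : Pt} (hD : cross2 (w - v) (u - v) ≠ 0)
    (hp : p ∈ convexHull ℝ ({u, v, w} : Set Pt))
    (hpi : p ∉ interior (convexHull ℝ ({u, v, w} : Set Pt))) :
    ∃ x y : Pt, x ∈ ({u, v, w} : Set Pt) ∧ y ∈ ({u, v, w} : Set Pt) ∧ x ≠ y
      ∧ p ∈ segment ℝ x y := by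
  obtain ⟨huv, hwv, huw⟩ := tri_ne_of_D hD
  obtain ⟨a, b, c, ha, hb, hc, habc, hpeq⟩ := tri_rep hp
  have hA : cross2 (w - v) (p - v) / cross2 (w - v) (u - v) = a := by
    rw [evalA habc p hpeq, mul_div_assoc, div_self hD, mul_one]
  have hC : cross2 (p - v) (u - v) / cross2 (w - v) (u - v) = c := by
    rw [evalC habc p hpeq, mul_div_assoc, div_self hD, mul_one]
  have hnot : ¬(0 < a ∧ 0 < b ∧ 0 < c) := by
    rintro ⟨h1, h2, h3⟩
    exact hpi (pos_tri_interior hD (hA ▸ h1) (by rw [hA, hC]; linarith) (hC ▸ h3))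
  have hzero : a = 0 ∨ b = 0 ∨ c = 0 := by
    by_contra hcon
    push_neg at hcon
    exact hnot ⟨lt_of_le_of_ne ha (Ne.symm hcon.1), lt_of_le_of_ne hb (Ne.symm hcon.2.1),
      lt_of_le_of_ne hc (Ne.symm hcon.2.2)⟩
  rcases hzero with h0 | h0 | h0
  · refine ⟨v, w, by simp, by simp, Ne.symm hwv, ⟨b, c, hb, hc, by linarith, ?_⟩⟩
    rw [hpeq, h0, zero_smul, zero_add]
  · refine ⟨u, w, by simp, by simp, huw, ⟨a, c, ha, hc, by linarith, ?_⟩⟩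
    rw [hpeq, h0, zero_smul, add_zero]
  · refine ⟨u, v, by simp, by simp, huv, ⟨a, b, ha, hb, by linarith, ?_⟩⟩
    rw [hpeq, h0, zero_smul, add_zero]

lemma vertex_not_interior_tri {u v w : Pt} (hD : cross2 (w - v) (u - v) ≠ 0) :
    u ∉ interior (convexHull ℝ ({u, v, w} : Set Pt))
    ∧ v ∉ interior (convexHull ℝ ({u, v, w} : Set Pt))
    ∧ w ∉ interior (convexHull ℝ ({u, v, w} : Set Pt)) := by
  refine ⟨fun h => ?_, fun h => ?_, fun h => ?_⟩
  · have := (interior_tri_pos hD h).2.2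
    rw [cross2_self, zero_div] at this
    exact lt_irrefl 0 this
  · have := (interior_tri_pos hD h).1
    rw [sub_self, cross2_zero_right, zero_div] at this
    exact lt_irrefl 0 this
  · have := (interior_tri_pos hD h).1
    rw [cross2_self, zero_div] at this
    exact lt_irrefl 0 this

end Triangle
section Main

open Set

lemma GenPos.mono {S S' : Set Pt} (hsub : S' ⊆ S) (hgp : GenPos S) : GenPos S' :=
  fun p hp q hq r hr h1 h2 h3 => hgp p (hsub hp) q (hsub hq) r (hsub hr) h1 h2 h3

lemma LambdaConvex.mono {lam : ℕ} {S S' : Set Pt} (hfin : S.Finite) (hsub : S' ⊆ S)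
    (hconv : LambdaConvex lam S) : LambdaConvex lam S' := by
  intro p hp q hq r hr
  calc (S' ∩ interior (convexHull ℝ ({p, q, r} : Set Pt))).ncard
      ≤ (S ∩ interior (convexHull ℝ ({p, q, r} : Set Pt))).ncard :=
        Set.ncard_le_ncard (inter_subset_inter_left _ hsub) (hfin.inter_of_left _)
    _ ≤ lam := hconv p (hsub hp) q (hsub hq) r (hsub hr)

lemma tri_ncard_le (u v w : Pt) : ({u, v, w} : Set Pt).ncard ≤ 3 := by
  calc ({u, v, w} : Set Pt).ncard ≤ ({v, w} : Set Pt).ncard + 1 := Set.ncard_insert_le _ _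
    _ ≤ (({w} : Set Pt).ncard + 1) + 1 := by
        exact Nat.add_le_add_right (Set.ncard_insert_le _ _) 1
    _ ≤ 3 := by simp

set_option maxHeartbeats 2000000 in
lemma counting (lam : ℕ) : ∀ h : ℕ, ∀ S : Set Pt, S.Finite → GenPos S → LambdaConvex lam S →
    (hullVertices S).ncard = h → 3 ≤ h → S.ncard ≤ h + (h - 2) * lam := by
  intro h
  induction h using Nat.strong_induction_on with
  | _ h IH =>
  intro S hfin hgp hconv hVcard h3
  have hVsub : hullVertices S ⊆ S := hullVertices_subset S
  have hVfin : (hullVertices S).Finite := hfin.subset hVsub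
  have hSsub : S ⊆ convexHull ℝ (hullVertices S) := subset_convexHull_hullVertices hfin
  rcases eq_or_lt_of_le h3 with hbase | hstep
  · -- base case h = 3
    subst hbase
    obtain ⟨u, v, w, huv, huw, hvw, hVeq⟩ := Set.ncard_eq_three.1 hVcard.symm.symm
    have huS : u ∈ S := hVsub (hVeq ▸ (by simp))
    have hvS : v ∈ S := hVsub (hVeq ▸ (by simp))
    have hwS : w ∈ S := hVsub (hVeq ▸ (by simp))
    have hD : cross2 (w - v) (u - v) ≠ 0 :=
      hgp.cross_ne hvS hwS huS hvw (Ne.symm huv) (Ne.symm huw)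
    have hsplit : S ⊆ ({u, v, w} : Set Pt) ∪ (S ∩ interior (convexHull ℝ ({u, v, w} : Set Pt))) := by
      intro p hp
      by_cases hpin : p ∈ ({u, v, w} : Set Pt)
      · exact Or.inl hpin
      have hpT : p ∈ convexHull ℝ ({u, v, w} : Set Pt) := by
        have := hSsub hp; rwa [hVeq] at this
      by_cases hpi : p ∈ interior (convexHull ℝ ({u, v, w} : Set Pt))
      · exact Or.inr ⟨hp, hpi⟩
      exfalso
      obtain ⟨x, y, hx, hy, hxy, hseg⟩ := tri_frontier_seg hD hpT hpi
      have hxS : x ∈ S := hVsub (hVeq ▸ hx)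
      have hyS : y ∈ S := hVsub (hVeq ▸ hy)
      have hxp : x ≠ p := fun hh => hpin (hh ▸ hx)
      have hyp : y ≠ p := fun hh => hpin (hh ▸ hy)
      exact hgp x hxS y hyS p hp hxy hxp hyp (collinear_of_mem_segment hxy hseg)
    calc S.ncard ≤ (({u, v, w} : Set Pt)
          ∪ (S ∩ interior (convexHull ℝ ({u, v, w} : Set Pt)))).ncard :=
          Set.ncard_le_ncard hsplit
            (((Set.finite_singleton _).insert _ |>.insert _).union
              (hfin.inter_of_left _))
      _ ≤ ({u, v, w} : Set Pt).ncard
          + (S ∩ interior (convexHull ℝ ({u, v, w} : Set Pt))).ncard := Set.ncard_union_le _ _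
      _ ≤ 3 + lam := Nat.add_le_add (tri_ncard_le u v w) (hconv u huS v hvS w hwS)
      _ ≤ 3 + (3 - 2) * lam := by omega
  · -- step case h ≥ 4
    have h4 : 4 ≤ h := hstep
    have hVne : (hullVertices S).Nonempty := Set.nonempty_of_ncard_ne_zero (by omega)
    obtain ⟨v, hvV⟩ := hVne
    set V' : Set Pt := hullVertices S \ {v} with hV'def
    have hV'fin : V'.Finite := hVfin.diff
    have hV'card : V'.ncard = h - 1 := by
      rw [hV'def, Set.ncard_diff_singleton_of_mem hvV, hVcard]
    have hV'sub : V' ⊆ S \ {v} := fun x hx => ⟨hVsub hx.1, hx.2⟩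
    have hV'ne : V'.Nonempty := Set.nonempty_of_ncard_ne_zero (by omega)
    have hvS : v ∈ S := hVsub hvV
    have hv' : v ∉ convexHull ℝ V' := fun hc => hvV.2 (convexHull_mono hV'sub hc)
    obtain ⟨f, cc, hfcc, hccv⟩ := geometric_hahn_banach_closed_point
      (convex_convexHull ℝ V') (hV'fin.isClosed_convexHull ℝ) hv'
    have hfV' : ∀ x ∈ V', f x < f v := fun x hx =>
      lt_trans (hfcc x (subset_convexHull ℝ V' hx)) hccv
    set a : ℝ := f (1, 0) with ha
    set b : ℝ := f (0, 1) with hb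
    have hf : ∀ z : Pt, f z = z.1 * a + z.2 * b := by
      intro z
      have hz : z = z.1 • ((1:ℝ), (0:ℝ)) + z.2 • ((0:ℝ), (1:ℝ)) := by
        apply Prod.ext <;> simp
      conv_lhs => rw [hz]
      rw [map_add, map_smul, map_smul, smul_eq_mul, smul_eq_mul, ha, hb]
    obtain ⟨x0, hx0⟩ := hV'ne
    have hab0 : ¬ (a = 0 ∧ b = 0) := by
      rintro ⟨ha0, hb0⟩
      have h1 := hfV' x0 hx0
      rw [hf x0, hf v, ha0, hb0] at h1
      simp at h1
    have habpos : 0 < a ^ 2 + b ^ 2 := by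
      rcases not_and_or.1 hab0 with h' | h' <;> positivity
    have habne : a ^ 2 + b ^ 2 ≠ 0 := ne_of_gt habpos
    set w0 : Pt := (-b, a) with hw0
    have hs_pos : ∀ x ∈ V', 0 < f v - f x := fun x hx => by linarith [hfV' x hx]
    set P : Pt → Pt := fun x => (f v - f x)⁻¹ • (x - v) with hP
    set τ : Pt → ℝ := fun x => a * (P x).2 - b * (P x).1 with hτ
    have hfP : ∀ x ∈ V', f (P x) = -1 := by
      intro x hx
      have hne : f v - f x ≠ 0 := ne_of_gt (hs_pos x hx)
      simp only [hP, map_smul, map_sub, smul_eq_mul]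
      field_simp
      ring
    have ker_rep : ∀ z : Pt, f z = 0 → z = ((a * z.2 - b * z.1) / (a ^ 2 + b ^ 2)) • w0 := by
      intro z hz
      rw [hf z] at hz
      apply Prod.ext
      · simp only [hw0, Prod.smul_fst, smul_eq_mul]
        field_simp
        linear_combination a * hz
      · simp only [hw0, Prod.smul_snd, smul_eq_mul]
        field_simp
        linear_combination b * hz
    have hPrep : ∀ x ∈ V', ∀ y ∈ V', P x - P y = ((τ x - τ y) / (a ^ 2 + b ^ 2)) • w0 := by
      intro x hx y hy
      have hz : f (P x - P y) = 0 := by rw [map_sub, hfP x hx, hfP y hy]; ring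
      have hrep := ker_rep _ hz
      have hcoef : a * (P x - P y).2 - b * (P x - P y).1 = τ x - τ y := by
        simp only [hτ, Prod.fst_sub, Prod.snd_sub]; ring
      rw [hcoef] at hrep
      exact hrep
    have hx_v_eq : ∀ x ∈ V', x - v = (f v - f x) • P x := by
      intro x hx
      simp only [hP]
      rw [smul_smul, mul_inv_cancel₀ (ne_of_gt (hs_pos x hx)), one_smul]
    have hPeq_of_τ : ∀ x ∈ V', ∀ y ∈ V', τ x = τ y → x = y := by
      intro x hx y hy hτeq
      by_contra hne
      have hPxy : P x = P y := by
        have h1 := hPrep x hx y hy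
        rw [hτeq, sub_self, zero_div, zero_smul] at h1
        exact sub_eq_zero.1 h1
      have hxv1 : x - v = (f v - f x) • P y := by rw [← hPxy]; exact hx_v_eq x hx
      have hyv1 : y - v = (f v - f y) • P y := hx_v_eq y hy
      have hcr : cross2 (x - v) (y - v) = 0 := by
        rw [hxv1, hyv1]
        simp only [cross2, Prod.smul_fst, Prod.smul_snd, smul_eq_mul]
        ring
      have hxS : x ∈ S := (hV'sub hx).1
      have hyS : y ∈ S := (hV'sub hy).1
      have hxv : x ≠ v := by have := (hV'sub hx).2; simpa using this
      have hyv : y ≠ v := by have := (hV'sub hy).2; simpa using this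
      exact hgp.cross_ne hvS hxS hyS (Ne.symm hxv) (Ne.symm hyv) hne hcr
    obtain ⟨u, hu, humin⟩ := Set.exists_min_image V' τ hV'fin ⟨x0, hx0⟩
    obtain ⟨w, hw, hwmax⟩ := Set.exists_max_image V' τ hV'fin ⟨x0, hx0⟩
    have hτne : τ u ≠ τ w := by
      intro heq
      obtain ⟨x1, x2, hx1, hx2, hx12⟩ := (Set.one_lt_ncard_iff hV'fin).1
        (show 1 < V'.ncard by omega)
      apply hx12
      apply hPeq_of_τ x1 hx1 x2 hx2
      have e1 : τ x1 = τ u := le_antisymm (heq ▸ hwmax x1 hx1) (humin x1 hx1)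
      have e2 : τ x2 = τ u := le_antisymm (heq ▸ hwmax x2 hx2) (humin x2 hx2)
      rw [e1, e2]
    have hτuw : τ u < τ w := lt_of_le_of_ne (humin w hw) hτne
    have huw : u ≠ w := fun hh => hτne (by rw [hh])
    have hu_S : u ∈ S := (hV'sub hu).1
    have hw_S : w ∈ S := (hV'sub hw).1
    have hu_ne_v : u ≠ v := by have := (hV'sub hu).2; simpa using this
    have hw_ne_v : w ≠ v := by have := (hV'sub hw).2; simpa using this
    -- cone representation of points of V'
    have hK : ∀ x ∈ V', ∃ α β : ℝ, 0 ≤ α ∧ 0 ≤ β ∧ x - v = α • (u - v) + β • (w - v) := by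
      intro x hx
      set θ : ℝ := (τ w - τ x) / (τ w - τ u) with hθ
      have hden : 0 < τ w - τ u := by linarith
      have hθ0 : 0 ≤ θ := div_nonneg (by linarith [hwmax x hx]) hden.le
      have hθ1 : θ ≤ 1 := by rw [hθ, div_le_one hden]; linarith [humin x hx]
      have hPx : P x = θ • P u + (1 - θ) • P w := by
        have h1 : P x - P w = ((τ x - τ w) / (a ^ 2 + b ^ 2)) • w0 := hPrep x hx w hw
        have h2 : P u - P w = ((τ u - τ w) / (a ^ 2 + b ^ 2)) • w0 := hPrep u hu w hw
        have hcoef : θ * ((τ u - τ w) / (a ^ 2 + b ^ 2)) = (τ x - τ w) / (a ^ 2 + b ^ 2) := by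
          rw [hθ]; field_simp; ring
        have key : θ • (P u - P w) = P x - P w := by
          rw [h1, h2, smul_smul, hcoef]
        have h3 : P x = θ • (P u - P w) + P w := by rw [key]; abel
        rw [h3, smul_sub, sub_smul, one_smul]; abel
      refine ⟨(f v - f x) * θ * (f v - f u)⁻¹, (f v - f x) * (1 - θ) * (f v - f w)⁻¹,
        mul_nonneg (mul_nonneg (hs_pos x hx).le hθ0) (inv_nonneg.2 (hs_pos u hu).le),
        mul_nonneg (mul_nonneg (hs_pos x hx).le (by linarith)) (inv_nonneg.2 (hs_pos w hw).le),
        ?_⟩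
      have e1 : ((f v - f x) * θ * (f v - f u)⁻¹) • (u - v) = ((f v - f x) * θ) • P u := by
        rw [hx_v_eq u hu, smul_smul]
        congr 1
        field_simp
        exact mul_div_cancel_right₀ _ (ne_of_gt (hs_pos u hu))
      have e2 : ((f v - f x) * (1 - θ) * (f v - f w)⁻¹) • (w - v) = ((f v - f x) * (1 - θ)) • P w := by
        rw [hx_v_eq w hw, smul_smul]
        congr 1
        field_simp
        exact mul_div_cancel_right₀ _ (ne_of_gt (hs_pos w hw))
      rw [hx_v_eq x hx, hPx, smul_add]
      simp only [smul_smul]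
      rw [e1, e2]
    -- the cone K
    set K : Set Pt := {y : Pt | ∃ α β : ℝ, 0 ≤ α ∧ 0 ≤ β ∧ y - v = α • (u - v) + β • (w - v)}
      with hKdef
    have hKconv : Convex ℝ K := by
      rintro y hy z hz p q hp hq hpq
      obtain ⟨α1, β1, hα1, hβ1, h1⟩ := hy
      obtain ⟨α2, β2, hα2, hβ2, h2⟩ := hz
      refine ⟨p * α1 + q * α2, p * β1 + q * β2, by positivity, by positivity, ?_⟩
      have hsplit : (p • y + q • z) - v = p • (y - v) + q • (z - v) := by
        apply Prod.ext
        · simp only [Prod.fst_add, Prod.fst_sub, Prod.smul_fst, smul_eq_mul]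
          linear_combination v.1 * hpq
        · simp only [Prod.snd_add, Prod.snd_sub, Prod.smul_snd, smul_eq_mul]
          linear_combination v.2 * hpq
      rw [hsplit, h1, h2]
      apply Prod.ext
      · simp only [Prod.fst_add, Prod.fst_sub, Prod.smul_fst, smul_eq_mul]; ring
      · simp only [Prod.snd_add, Prod.snd_sub, Prod.smul_snd, smul_eq_mul]; ring
    have hVK : hullVertices S ⊆ K := by
      intro x hx
      rcases eq_or_ne x v with rfl | hxv
      · exact ⟨0, 0, le_rfl, le_rfl, by simp⟩
      · exact hK x ⟨hx, by simpa using hxv⟩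
    have hconvK : convexHull ℝ (hullVertices S) ⊆ K := convexHull_min hVK hKconv
    -- the triangle T and functional g
    set T : Set Pt := convexHull ℝ ({u, v, w} : Set Pt) with hTdef
    have hD : cross2 (w - v) (u - v) ≠ 0 :=
      hgp.cross_ne hvS hw_S hu_S (Ne.symm hw_ne_v) (Ne.symm hu_ne_v) (Ne.symm huw)
    have hG0 : cross2 (w - u) (v - u) ≠ 0 :=
      hgp.cross_ne hu_S hw_S hvS huw hu_ne_v hw_ne_v
    set c0 : ℝ := if 0 < cross2 (w - u) (v - u) then 1 else -1 with hc0
    set G : ℝ := c0 * cross2 (w - u) (v - u) with hGdef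
    have hGpos : 0 < G := by
      rw [hGdef, hc0]
      split_ifs with hsp
      · simpa using hsp
      · have hlt : cross2 (w - u) (v - u) < 0 := lt_of_le_of_ne (not_lt.1 hsp) hG0
        rw [neg_mul, one_mul]
        linarith
    set g : Pt → ℝ := fun y => c0 * cross2 (w - u) (y - u) with hg
    have hgu : g u = 0 := by simp only [hg]; rw [sub_self, cross2_zero_right, mul_zero]
    have hgw : g w = 0 := by simp only [hg]; rw [cross2_self, mul_zero]
    have hgK : ∀ y : Pt, ∀ α β : ℝ, y - v = α • (u - v) + β • (w - v) →
        g y = (1 - α - β) * G := by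
      intro y α β hy
      have hy1 := congrArg Prod.fst hy
      have hy2 := congrArg Prod.snd hy
      simp only [Prod.fst_sub, Prod.snd_sub, Prod.fst_add, Prod.snd_add,
        Prod.smul_fst, Prod.smul_snd, smul_eq_mul] at hy1 hy2
      have ey1 : y.1 = v.1 + α * (u.1 - v.1) + β * (w.1 - v.1) := by linarith
      have ey2 : y.2 = v.2 + α * (u.2 - v.2) + β * (w.2 - v.2) := by linarith
      simp only [hg, hGdef, cross2, Prod.fst_sub, Prod.snd_sub]
      rw [ey1, ey2]; ring
    have hcombo_mem : ∀ y : Pt, ∀ α β : ℝ, 0 ≤ α → 0 ≤ β → α + β ≤ 1 →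
        y - v = α • (u - v) + β • (w - v) → y ∈ T := by
      intro y α β hα hβ hαβ hy
      have hy1 := congrArg Prod.fst hy
      have hy2 := congrArg Prod.snd hy
      simp only [Prod.fst_sub, Prod.snd_sub, Prod.fst_add, Prod.snd_add,
        Prod.smul_fst, Prod.smul_snd, smul_eq_mul] at hy1 hy2
      have hyeq : y = α • u + (1 - α - β) • v + β • w := by
        apply Prod.ext
        · simp only [Prod.fst_add, Prod.smul_fst, smul_eq_mul]; linarith
        · simp only [Prod.snd_add, Prod.smul_snd, smul_eq_mul]; linarith
      rw [hyeq, hTdef]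
      exact combo_mem_tri hα (by linarith) hβ (by ring)
    have hT_halfplane : T ⊆ {y : Pt | 0 ≤ c0 * cross2 (w - u) (y - u)} := by
      rw [hTdef]
      apply tri_subset_halfplane
      · rw [sub_self, cross2_zero_right, mul_zero]
      · rw [← hGdef]; exact hGpos.le
      · rw [cross2_self, mul_zero]
    have hgV'lt : ∀ x ∈ V', x ≠ u → x ≠ w → g x < 0 := by
      intro x hx hxu hxw
      obtain ⟨α, β, hα, hβ, hrep⟩ := hK x hx
      have hαβ : 1 < α + β := by
        by_contra hc
        push_neg at hc
        have hxT : x ∈ T := hcombo_mem x α β hα hβ hc hrep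
        apply hx.1.2
        refine convexHull_mono (show ({u, v, w} : Set Pt) ⊆ S \ {x} from ?_) ?_
        · rintro z hz
          rcases hz with rfl | rfl | rfl
          · exact ⟨hu_S, by simpa using Ne.symm hxu⟩
          · exact ⟨hvS, by simpa using fun hh => (hV'sub hx).2 (by simp [hh])⟩
          · exact ⟨hw_S, by simpa using Ne.symm hxw⟩
        · rw [hTdef] at hxT; exact hxT
      rw [hgK x α β hrep]
      nlinarith [hGpos]
    have hvT : v ∉ interior T := by rw [hTdef]; exact (vertex_not_interior_tri hD).2.1
    have huT : u ∉ interior T := by rw [hTdef]; exact (vertex_not_interior_tri hD).1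
    have hwT : w ∉ interior T := by rw [hTdef]; exact (vertex_not_interior_tri hD).2.2
    set S₂ : Set Pt := S \ insert v (interior T) with hS2def
    have hS2sub : S₂ ⊆ S := Set.diff_subset
    have hS2fin : S₂.Finite := hfin.subset hS2sub
    have hS2gp : GenPos S₂ := hgp.mono hS2sub
    have hS2conv : LambdaConvex lam S₂ := hconv.mono hfin hS2sub
    have hV'S2 : V' ⊆ S₂ := by
      intro x hx
      refine ⟨(hV'sub hx).1, ?_⟩
      intro hmem
      rcases Set.mem_insert_iff.1 hmem with rfl | hxint
      · exact (hV'sub hx).2 rfl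
      rcases eq_or_ne x u with rfl | hxu
      · exact huT hxint
      rcases eq_or_ne x w with rfl | hxw
      · exact hwT hxint
      have h1 : 0 ≤ g x := hT_halfplane (interior_subset hxint)
      exact absurd h1 (not_le.2 (hgV'lt x hx hxu hxw))
    have hcount1 : S.ncard ≤ S₂.ncard + (1 + lam) := by
      have huniv : S = S₂ ∪ (S ∩ insert v (interior T)) := by
        rw [hS2def]; exact (Set.diff_union_inter S _).symm
      calc S.ncard = (S₂ ∪ (S ∩ insert v (interior T))).ncard := by rw [← huniv]
        _ ≤ S₂.ncard + (S ∩ insert v (interior T)).ncard := Set.ncard_union_le _ _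
        _ ≤ S₂.ncard + (1 + lam) := by
            refine Nat.add_le_add_left ?_ _
            have hsub2 : S ∩ insert v (interior T) ⊆ insert v (S ∩ interior T) := by
              rintro x ⟨hxS, hxv⟩
              rcases Set.mem_insert_iff.1 hxv with rfl | hxi
              · exact Set.mem_insert _ _
              · exact Set.mem_insert_of_mem _ ⟨hxS, hxi⟩
            calc (S ∩ insert v (interior T)).ncard
                ≤ (insert v (S ∩ interior T)).ncard :=
                  Set.ncard_le_ncard hsub2 ((hfin.inter_of_left _).insert v)
              _ ≤ (S ∩ interior T).ncard + 1 := Set.ncard_insert_le _ _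
              _ ≤ 1 + lam := by
                  have hlc := hconv u hu_S v hvS w hw_S
                  rw [← hTdef] at hlc
                  omega
    by_cases hS2card : S₂.ncard < 3
    · have hle1 : S.ncard ≤ 3 + lam := by omega
      have hle2 : lam ≤ (h - 2) * lam := Nat.le_mul_of_pos_left lam (by omega)
      omega
    push_neg at hS2card
    have hhull2 : hullVertices S₂ ⊆ V' := by
      intro p hp
      have hpS2 : p ∈ S₂ := hp.1
      have hpS : p ∈ S := hpS2.1
      have hpv : p ≠ v := fun hh => hpS2.2 (hh ▸ Set.mem_insert _ _)
      have hpint : p ∉ interior T := fun hh => hpS2.2 (Set.mem_insert_of_mem _ hh)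
      by_cases hpV : p ∈ hullVertices S
      · exact ⟨hpV, by simpa using hpv⟩
      exfalso
      have hpu : p ≠ u := fun hh => hpV (hh ▸ hu.1)
      have hpw : p ≠ w := fun hh => hpV (hh ▸ hw.1)
      have hpT : p ∉ T := by
        intro hpT
        obtain ⟨x, y, hx, hy, hxy, hseg⟩ :=
          tri_frontier_seg hD (by rwa [hTdef] at hpT) (by rwa [hTdef] at hpint)
        have hxS : x ∈ S := by rcases hx with rfl | rfl | rfl; exacts [hu_S, hvS, hw_S]
        have hyS : y ∈ S := by rcases hy with rfl | rfl | rfl; exacts [hu_S, hvS, hw_S]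
        have hxp : x ≠ p := by
          rcases hx with rfl | rfl | rfl
          exacts [Ne.symm hpu, Ne.symm hpv, Ne.symm hpw]
        have hyp : y ≠ p := by
          rcases hy with rfl | rfl | rfl
          exacts [Ne.symm hpu, Ne.symm hpv, Ne.symm hpw]
        exact hgp x hxS y hyS p hpS hxy hxp hyp (collinear_of_mem_segment hxy hseg)
      have hpK : p ∈ convexHull ℝ (hullVertices S) := hSsub hpS
      obtain ⟨αp, βp, hαp, hβp, hrepp⟩ := hconvK hpK
      have hgp_neg : g p < 0 := by
        have h1 : 1 < αp + βp := by
          by_contra hc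
          push_neg at hc
          exact hpT (hcombo_mem p αp βp hαp hβp hc hrepp)
        rw [hgK p αp βp hrepp]
        nlinarith [hGpos]
      have hVins : hullVertices S = insert v V' := by
        rw [hV'def, Set.insert_diff_singleton]
        exact (Set.insert_eq_self.2 hvV).symm
      have hpK2 : p ∈ convexHull ℝ (insert v V') := by rw [← hVins]; exact hpK
      rw [convexHull_insert ⟨x0, hx0⟩, mem_convexJoin] at hpK2
      obtain ⟨x1, hx1, z, hz, hpseg⟩ := hpK2
      rw [Set.mem_singleton_iff] at hx1
      rw [hx1] at hpseg
      have hpseg' := hpseg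
      obtain ⟨a1, b1, ha1, hb1, hab1, hpeq⟩ := hpseg'
      have hgz : g z ≤ 0 := by
        have hsubhp : convexHull ℝ V' ⊆ {y : Pt | 0 ≤ (-c0) * cross2 (w - u) (y - u)} := by
          apply convexHull_min _ (convex_cross_halfplane _ _ _)
          intro x hx
          have hle : g x ≤ 0 := by
            rcases eq_or_ne x u with rfl | hxu
            · rw [hgu]
            rcases eq_or_ne x w with rfl | hxw
            · rw [hgw]
            exact (hgV'lt x hx hxu hxw).le
          simp only [Set.mem_setOf_eq, neg_mul]
          simp only [hg] at hle
          linarith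
        have hzmem := hsubhp hz
        simp only [Set.mem_setOf_eq, neg_mul] at hzmem
        simp only [hg]
        linarith
      have hpconvV' : p ∈ convexHull ℝ V' := by
        rcases eq_or_lt_of_le ha1 with ha10 | ha1pos
        · have hb11 : b1 = 1 := by linarith
          have hpz : p = z := by
            rw [← hpeq, ← ha10, hb11, zero_smul, zero_add, one_smul]
          rw [hpz]; exact hz
        · have hgcombo : g p = a1 * G + b1 * g z := by
            simp only [hg, hGdef]
            rw [← hpeq, cross2_combo (w - u) u v z hab1]
            ring
          have hgzneg : g z < 0 := by
            rcases lt_or_eq_of_le hgz with h' | h'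
            · exact h'
            exfalso
            rw [h', mul_zero, add_zero] at hgcombo
            nlinarith [hGpos, hgp_neg]
          set s' : ℝ := -g z / (G - g z) with hs'
          have hGgz : 0 < G - g z := by linarith
          have hs'0 : 0 < s' := div_pos (by linarith) hGgz
          have hs'1 : s' < 1 := by rw [hs', div_lt_one hGgz]; linarith
          set m : Pt := s' • v + (1 - s') • z with hm
          have hzV : z ∈ convexHull ℝ (hullVertices S) :=
            convexHull_mono Set.diff_subset hz
          have hmV : m ∈ convexHull ℝ (hullVertices S) :=
            (convex_convexHull ℝ _) (subset_convexHull ℝ _ hvV) hzV hs'0.le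
              (by linarith) (by ring)
          have hgm : g m = 0 := by
            have hstep1 : g m = s' * G + (1 - s') * g z := by
              simp only [hg, hGdef, hm]
              rw [cross2_combo (w - u) u v z (by ring : s' + (1 - s') = 1)]
              ring
            rw [hstep1, hs']
            field_simp
            ring
          obtain ⟨αm, βm, hαm, hβm, hrepm⟩ := hconvK hmV
          have hsum : αm + βm = 1 := by
            have hgm2 := hgK m αm βm hrepm
            rw [hgm] at hgm2
            have hz0 : (1 - αm - βm) * G = 0 := hgm2.symm
            rcases mul_eq_zero.1 hz0 with h' | h'
            · linarith
            · exact absurd h' (ne_of_gt hGpos)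
          have hmuw : m ∈ convexHull ℝ V' := by
            have hm1 := congrArg Prod.fst hrepm
            have hm2 := congrArg Prod.snd hrepm
            simp only [Prod.fst_sub, Prod.snd_sub, Prod.fst_add, Prod.snd_add,
              Prod.smul_fst, Prod.smul_snd, smul_eq_mul] at hm1 hm2
            have hmeq : m = αm • u + βm • w := by
              apply Prod.ext
              · simp only [Prod.fst_add, Prod.smul_fst, smul_eq_mul]
                have : αm * v.1 + βm * v.1 = v.1 := by
                  rw [← add_mul, hsum, one_mul]
                nlinarith [hm1, this]
              · simp only [Prod.snd_add, Prod.smul_snd, smul_eq_mul]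
                have : αm * v.2 + βm * v.2 = v.2 := by
                  rw [← add_mul, hsum, one_mul]
                nlinarith [hm2, this]
            have hmseg : m ∈ segment ℝ u w := by
              rw [hmeq]; exact ⟨αm, βm, hαm, hβm, hsum, rfl⟩
            have hsegsub : segment ℝ u w ⊆ convexHull ℝ V' := by
              rw [← convexHull_pair]
              apply convexHull_mono
              rintro x (rfl | rfl)
              exacts [hu, hw]
            exact hsegsub hmseg
          have hb1eq : b1 = 1 - a1 := by linarith
          have ha1s : a1 < s' := by
            rw [hgcombo, hb1eq] at hgp_neg
            rw [hs', lt_div_iff₀ hGgz]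
            nlinarith
          have hdiv1 : a1 / s' ≤ 1 := by rw [div_le_one hs'0]; linarith
          have hpeq2 : (a1 / s') • m + (1 - a1 / s') • z = p := by
            rw [hm, ← hpeq, hb1eq]
            have hs'ne : s' ≠ 0 := ne_of_gt hs'0
            apply Prod.ext
            · simp only [Prod.fst_add, Prod.smul_fst, smul_eq_mul]
              field_simp
              ring
            · simp only [Prod.snd_add, Prod.smul_snd, smul_eq_mul]
              field_simp
              ring
          rw [← hpeq2]
          exact (convex_convexHull ℝ V') hmuw hz (by positivity) (by linarith) (by ring)
      apply hp.2
      apply convexHull_mono (show V' ⊆ S₂ \ {p} from ?_) hpconvV'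
      intro x hx
      refine ⟨hV'S2 hx, ?_⟩
      intro hh
      rw [Set.mem_singleton_iff] at hh
      exact hpV (hh ▸ hx.1)
    set h₂ := (hullVertices S₂).ncard with hh2
    have h₂3 : 3 ≤ h₂ := three_le_hullVertices_ncard hS2fin hS2gp hS2card
    have h₂le : h₂ ≤ h - 1 := by
      calc h₂ ≤ V'.ncard := Set.ncard_le_ncard hhull2 hV'fin
        _ = h - 1 := hV'card
    have hIH := IH h₂ (by omega) S₂ hS2fin hS2gp hS2conv rfl h₂3
    have e2 : (h₂ - 2) * lam ≤ (h - 3) * lam := Nat.mul_le_mul_right lam (by omega)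
    have e3 : (h - 2) * lam = (h - 3) * lam + lam := by
      have hx : h - 2 = (h - 3) + 1 := by omega
      rw [hx, Nat.add_mul, one_mul]
    set A := (h₂ - 2) * lam with hA
    set B := (h - 3) * lam with hB
    set C := (h - 2) * lam with hC
    omega


end Main

/-- every `ℓ`-convex set of at least `(k-3)(ℓ+1)+3` points in general
position contains `k` points in convex position. -/
theorem statement_15 (k lam : ℕ) (hk : 3 ≤ k) (S : Set Pt) (hfin : S.Finite)
    (hgp : GenPos S) (hconv : LambdaConvex lam S)
    (hcard : (k - 3) * (lam + 1) + 3 ≤ S.ncard) :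
    ∃ H ⊆ S, H.ncard = k ∧ ConvexPos H := by
  have h3S : 3 ≤ S.ncard := le_trans (by omega) hcard
  by_cases hcase : k ≤ (hullVertices S).ncard
  · obtain ⟨H, hHsub, hHcard⟩ := Set.exists_subset_card_eq hcase
    have hHS : H ⊆ S := hHsub.trans (hullVertices_subset S)
    refine ⟨H, hHS, hHcard, ?_⟩
    intro p hpH hmem
    exact (hHsub hpH).2
      (convexHull_mono (diff_subset_diff_left hHS) hmem)
  · push_neg at hcase
    exfalso
    have h3V : 3 ≤ (hullVertices S).ncard := three_le_hullVertices_ncard hfin hgp h3S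
    have hcount := counting lam (hullVertices S).ncard S hfin hgp hconv rfl h3V
    have e2 : ((hullVertices S).ncard - 2) * lam ≤ (k - 3) * lam :=
      Nat.mul_le_mul_right lam (by omega)
    have e3 : (k - 3) * (lam + 1) = (k - 3) * lam + (k - 3) := by ring
    set A := ((hullVertices S).ncard - 2) * lam with hA
    set B := (k - 3) * lam with hB
    set C := (k - 3) * (lam + 1) with hC
    omega
end
end
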